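/- arXiv:1802.06065 — 7 statements merged into one kernel-verified Lean document; each statement's English description precedes it below -/
import Mathlib

section
/- Let A be an N × N complex matrix whose eigenvalue λ of largest absolute value is unique (i.e., |λ| > |λ_j| for all other eigenvalues λ_j) and λ ≠ 0. Define |H_ℓ| := (1/det(I - zA))[ℓ], the ℓ-th coefficient of the power series 1/det(I - zA). Then there exists a bounded function f : ℕ → ℂ such that lim_{ℓ→∞} f(ℓ) exists and |H_ℓ| = λ^ℓ f(ℓ) for all ℓ ≥ 1. -/
/-- The zeta function of a graph/matrix: the formal power series `1/det(I - zA)`. -/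
noncomputable def graphZeta {N : ℕ} (A : Matrix (Fin N) (Fin N) ℂ) : PowerSeries ℂ :=
  (Matrix.det (1 - (PowerSeries.X : PowerSeries ℂ) • A.map (PowerSeries.C)))⁻¹

/-!
Since the characteristic polynomial splits as `∏ (X - λᵢ)`, its reverse `det (1 - zA)` is
`∏ (1 - λᵢ z)`, so `1 / det (1 - zA) = ∏ᵢ ∑ₙ λᵢⁿ zⁿ`. Rescaling `z ↦ λ z` turns this into
`Q(z) / (1 - z)` with `Q = ∏_{j ≠ 0} ∑ₙ (λⱼ / λ)ⁿ zⁿ`, whose coefficients are absolutely summable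
because `|λⱼ / λ| < 1`. Hence the `ℓ`-th coefficient is `λ^ℓ` times the `ℓ`-th partial sum of the
coefficients of `Q`, and these partial sums converge.
-/

open PowerSeries Finset

namespace Polynomial

theorem reverse_prod {R ι : Type*} [CommSemiring R] [NoZeroDivisors R] (s : Finset ι)
    (p : ι → R[X]) :
    (∏ i ∈ s, p i).reverse = ∏ i ∈ s, (p i).reverse :=
  map_prod (⟨⟨reverse, by simpa using reverse_C (1 : R)⟩, reverse_mul_of_domain⟩ : R[X] →* R[X])
    p s

theorem reverse_X_sub_C {R : Type*} [Ring R] (μ : R) : (X - C μ).reverse = 1 - C μ * X := by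
  nontriviality R
  rw [sub_eq_add_neg, ← C_neg, reverse_add_C, natDegree_X, pow_one, C_neg, neg_mul,
    ← sub_eq_add_neg]
  simpa using (reverse_mul_X (1 : R[X])).trans (by simpa using reverse_C (1 : R))

end Polynomial

theorem Matrix.charpolyRev_eq_prod {n ι R : Type*} [Fintype n] [DecidableEq n] [CommRing R]
    [NoZeroDivisors R] (A : Matrix n n R) (s : Finset ι) (μ : ι → R)
    (h : A.charpoly = ∏ i ∈ s, (Polynomial.X - Polynomial.C (μ i))) :
    A.charpolyRev = ∏ i ∈ s, (1 - Polynomial.C (μ i) * Polynomial.X) := by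
  rw [← Matrix.reverse_charpoly, h, Polynomial.reverse_prod]
  simp only [Polynomial.reverse_X_sub_C]

theorem Matrix.det_one_sub_X_smul_map_C {n R : Type*} [Fintype n] [DecidableEq n] [CommRing R]
    (A : Matrix n n R) :
    (1 - (X : R⟦X⟧) • A.map C).det = (A.charpolyRev : R⟦X⟧) := by
  rw [Matrix.charpolyRev, ← Polynomial.coeToPowerSeries.ringHom_apply, RingHom.map_det]
  congr 1
  ext i j
  by_cases h : i = j <;> simp [h] <;> ring

namespace PowerSeries

theorem mk_pow_mul_one_sub_C_mul_X {R : Type*} [CommRing R] (μ : R) :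
    mk (μ ^ ·) * (1 - C μ * X) = 1 := by
  simpa [rescale_mk] using congrArg (rescale μ) (mk_one_mul_one_sub_eq_one R)

theorem inv_prod_one_sub_C_mul_X {k ι : Type*} [Field k] (s : Finset ι) (μ : ι → k) :
    (∏ i ∈ s, (1 - C (μ i) * X))⁻¹ = ∏ i ∈ s, mk (μ i ^ ·) := by
  rw [PowerSeries.inv_eq_iff_mul_eq_one (by simp [map_prod]), ← prod_mul_distrib]
  exact prod_eq_one fun i _ => mk_pow_mul_one_sub_C_mul_X (μ i)

theorem coeff_mul_mk_one {R : Type*} [Semiring R] (f : R⟦X⟧) (n : ℕ) :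
    coeff n (f * mk 1) = ∑ k ∈ range (n + 1), coeff k f := by
  simp [coeff_mul, Nat.sum_antidiagonal_eq_sum_range_succ_mk]

section Normed

variable {R : Type*} [NormedCommRing R]

theorem summable_norm_coeff_mul {f g : R⟦X⟧} (hf : Summable fun n => ‖coeff n f‖)
    (hg : Summable fun n => ‖coeff n g‖) : Summable fun n => ‖coeff n (f * g)‖ := by
  simpa only [coeff_mul] using summable_norm_sum_mul_antidiagonal_of_summable_norm hf hg

theorem summable_norm_coeff_prod_mk_pow {ι : Type*} (s : Finset ι) {μ : ι → R}
    (hμ : ∀ i ∈ s, ‖μ i‖ < 1) : Summable fun n => ‖coeff n (∏ i ∈ s, mk (μ i ^ ·))‖ := by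
  refine prod_induction _ (fun f : R⟦X⟧ => Summable fun n => ‖coeff n f‖)
    (fun _ _ => summable_norm_coeff_mul) ?_ fun i hi => ?_
  · refine summable_of_ne_finset_zero (s := {0}) fun n hn => ?_
    simp_all [coeff_one]
  · simpa using summable_norm_geometric_of_norm_lt_one (hμ i hi)

end Normed

end PowerSeries

theorem graphZeta_eq_prod_mk_pow {N : ℕ} {ι : Type*} [Fintype ι] (A : Matrix (Fin N) (Fin N) ℂ)
    (μ : ι → ℂ)
    (h : A.charpoly = ∏ i, (Polynomial.X - Polynomial.C (μ i))) :
    graphZeta A = ∏ i, mk (μ i ^ ·) := by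
  rw [graphZeta, Matrix.det_one_sub_X_smul_map_C, A.charpolyRev_eq_prod _ μ h,
    ← Polynomial.coeToPowerSeries.ringHom_apply, map_prod]
  simpa using inv_prod_one_sub_C_mul_X univ μ

/-- if the eigenvalue `λ = lam 0` of `A` strictly dominates all others in absolute
value and is nonzero, then the coefficients `|H_ℓ| = (1/det(I-zA))[ℓ]` satisfy
`|H_ℓ| = λ^ℓ f(ℓ)` for a bounded function `f` having a limit as `ℓ → ∞`. -/
theorem coeff_inv_det_eq_pow_mul_bounded {N : ℕ} (A : Matrix (Fin (N + 1)) (Fin (N + 1)) ℂ)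
    (lam : Fin (N + 1) → ℂ)
    (hchar : A.charpoly = ∏ i, (Polynomial.X - Polynomial.C (lam i)))
    (hdom : ∀ j, j ≠ 0 → ‖lam j‖ < ‖lam 0‖)
    (hne : lam 0 ≠ 0) :
    ∃ f : ℕ → ℂ,
      (∃ C : ℝ, ∀ ℓ, ‖f ℓ‖ ≤ C) ∧
      (∃ L : ℂ, Filter.Tendsto f Filter.atTop (nhds L)) ∧
      ∀ ℓ : ℕ, 1 ≤ ℓ → PowerSeries.coeff ℓ (graphZeta A) = lam 0 ^ ℓ * f ℓ := by
  set Q := ∏ j ∈ univ.erase 0, mk ((lam j / lam 0) ^ ·)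
  have hzeta : graphZeta A = rescale (lam 0) (Q * PowerSeries.mk 1) := by
    rw [graphZeta_eq_prod_mk_pow A lam hchar, ← mul_prod_erase univ _ (mem_univ 0), mul_comm,
      map_mul, map_prod, rescale_mk]
    simp only [rescale_mk, Pi.one_apply, mul_one, ← mul_pow, mul_div_cancel₀ _ hne]
  have hQ : Summable fun n => coeff n Q := by
    refine (summable_norm_coeff_prod_mk_pow (univ.erase 0) (μ := fun j => lam j / lam 0)
      fun j hj => ?_).of_norm
    rw [norm_div, div_lt_one (norm_pos_iff.mpr hne)]
    exact hdom j (ne_of_mem_erase hj)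
  have hlim := hQ.hasSum.tendsto_sum_nat.comp (Filter.tendsto_add_atTop_nat 1)
  obtain ⟨C, hC⟩ := hlim.norm.bddAbove_range
  refine ⟨fun ℓ => ∑ k ∈ range (ℓ + 1), coeff k Q, ⟨C, fun ℓ => hC ⟨ℓ, rfl⟩⟩, ⟨_, hlim⟩,
    fun ℓ _ => ?_⟩
  rw [hzeta, coeff_rescale, coeff_mul_mk_one]
end

section
/- Let A be an N × N complex matrix with a unique eigenvalue λ of maximal absolute value, λ ≠ 0, and let f(ℓ) := (1/det(I - zA))[ℓ] · λ^{-ℓ}. Then lim_{ℓ→∞} f(ℓ) = lim_{z→1/λ} (1 - zλ)/det(I - zA), and this limit equals ∏_{j≥2} (1 - λ_j/λ)^{-1} where λ₂, ..., λ_N are the remaining eigenvalues. -/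
open PowerSeries Filter Finset

lemma geom_mul_eq_one (c : ℂ) :
    (PowerSeries.mk fun n => c ^ n) *
      ((1 : PowerSeries ℂ) - PowerSeries.C c * PowerSeries.X) = 1 := by
  ext n
  cases n with
  | zero => simp
  | succ m =>
      rw [mul_sub, mul_one, map_sub]
      have h1 : (PowerSeries.mk fun n => c ^ n) * (PowerSeries.C c * PowerSeries.X)
          = ((PowerSeries.mk fun n => c ^ n) * PowerSeries.C c) * PowerSeries.X := by ring
      rw [h1, PowerSeries.coeff_succ_mul_X, PowerSeries.coeff_mul_C, PowerSeries.coeff_mk,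
        PowerSeries.coeff_mk, PowerSeries.coeff_one]
      simp [pow_succ]

lemma prod_geom_inv {ι : Type*} (s : Finset ι) (c : ι → ℂ) :
    (∏ j ∈ s, ((1 : PowerSeries ℂ) - PowerSeries.C (c j) * PowerSeries.X))⁻¹
      = ∏ j ∈ s, PowerSeries.mk fun n => c j ^ n := by
  symm
  rw [PowerSeries.eq_inv_iff_mul_eq_one]
  · rw [← Finset.prod_mul_distrib]
    rw [Finset.prod_congr rfl fun j _ => geom_mul_eq_one (c j)]
    exact Finset.prod_const_one
  · simp

lemma det_one_sub_smul_eq {N : ℕ} (A : Matrix (Fin (N + 1)) (Fin (N + 1)) ℂ)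
    (lam : Fin (N + 1) → ℂ)
    (hchar : A.charpoly = ∏ i, (Polynomial.X - Polynomial.C (lam i))) (z : ℂ) :
    Matrix.det (1 - z • A) = ∏ j, (1 - z * lam j) := by
  rcases eq_or_ne z 0 with hz | hz
  · simp [hz]
  · have h1 : (1 : Matrix (Fin (N+1)) (Fin (N+1)) ℂ) - z • A
        = z • (z⁻¹ • (1 : Matrix (Fin (N+1)) (Fin (N+1)) ℂ) - A) := by
      rw [smul_sub, smul_smul, mul_inv_cancel₀ hz, one_smul]
    have h2 : Matrix.det (z⁻¹ • (1 : Matrix (Fin (N+1)) (Fin (N+1)) ℂ) - A)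
        = Polynomial.eval z⁻¹ A.charpoly := by
      rw [Matrix.charpoly, ← Polynomial.coe_evalRingHom, RingHom.map_det]
      congr 1
      ext i j
      rcases eq_or_ne i j with hij | hij
      · subst hij
        simp [RingHom.mapMatrix_apply, Matrix.charmatrix_apply_eq, Matrix.one_apply_eq]
      · simp [RingHom.mapMatrix_apply, Matrix.charmatrix_apply_ne _ _ _ hij,
          Matrix.one_apply_ne hij]
    rw [h1, Matrix.det_smul, h2, hchar, Polynomial.eval_prod]
    simp only [Polynomial.eval_sub, Polynomial.eval_X, Polynomial.eval_C, Fintype.card_fin]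
    rw [show (z ^ (N + 1) : ℂ) = ∏ _j : Fin (N + 1), z by
      rw [Finset.prod_const, Finset.card_univ, Fintype.card_fin]]
    rw [← Finset.prod_mul_distrib]
    refine Finset.prod_congr rfl fun j _ => ?_
    rw [mul_sub, mul_inv_cancel₀ hz]

lemma graphZeta_eq {N : ℕ} (A : Matrix (Fin (N + 1)) (Fin (N + 1)) ℂ)
    (lam : Fin (N + 1) → ℂ)
    (hchar : A.charpoly = ∏ i, (Polynomial.X - Polynomial.C (lam i))) :
    graphZeta A = ∏ j, PowerSeries.mk fun n => lam j ^ n := by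
  have hpoly : A.charpolyRev = ∏ j, (1 - Polynomial.C (lam j) * Polynomial.X) := by
    apply Polynomial.funext
    intro z
    have hl : Polynomial.eval z A.charpolyRev = Matrix.det (1 - z • A) := by
      rw [Matrix.charpolyRev, ← Polynomial.coe_evalRingHom, RingHom.map_det]
      congr 1
      ext i j
      rcases eq_or_ne i j with hij | hij
      · subst hij
        simp [RingHom.mapMatrix_apply, Matrix.one_apply_eq]
        ring
      · simp [RingHom.mapMatrix_apply, Matrix.one_apply_ne hij]
        ring
    rw [hl, det_one_sub_smul_eq A lam hchar z, Polynomial.eval_prod]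
    refine Finset.prod_congr rfl fun j _ => ?_
    simp only [Polynomial.eval_sub, Polynomial.eval_one, Polynomial.eval_mul,
      Polynomial.eval_C, Polynomial.eval_X]
    ring
  have hps : Matrix.det (1 - (PowerSeries.X : PowerSeries ℂ) • A.map (PowerSeries.C))
      = ∏ j, ((1 : PowerSeries ℂ) - PowerSeries.C (lam j) * PowerSeries.X) := by
    have hmap : (Polynomial.coeToPowerSeries.ringHom (R := ℂ)) A.charpolyRev
        = Matrix.det (1 - (PowerSeries.X : PowerSeries ℂ) • A.map (PowerSeries.C)) := by
      rw [Matrix.charpolyRev, RingHom.map_det]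
      congr 1
      ext i j
      rcases eq_or_ne i j with hij | hij
      · subst hij
        simp [RingHom.mapMatrix_apply, Matrix.one_apply_eq]
        ring
      · simp [RingHom.mapMatrix_apply, Matrix.one_apply_ne hij]
        ring
    rw [← hmap, hpoly, map_prod]
    refine Finset.prod_congr rfl fun j _ => ?_
    simp
  rw [graphZeta, hps, prod_geom_inv]

lemma key_sum {ι : Type*} [DecidableEq ι] (c : ι → ℂ) (w : ℂ) (s : Finset ι)
    (h : ∀ j ∈ s, ‖c j * w‖ < 1) :
    Summable (fun k =>
        ‖(PowerSeries.coeff k (∏ j ∈ s, PowerSeries.mk fun n => c j ^ n)) * w ^ k‖) ∧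
    (∑' k, (PowerSeries.coeff k (∏ j ∈ s, PowerSeries.mk fun n => c j ^ n)) * w ^ k)
      = ∏ j ∈ s, (1 - c j * w)⁻¹ := by
  induction s using Finset.induction_on with
  | empty =>
      simp only [Finset.prod_empty, PowerSeries.coeff_one]
      constructor
      · have hs : Summable (fun k : ℕ => if k = 0 then ‖(1 : ℂ)‖ else 0) :=
          (hasSum_ite_eq 0 _).summable
        apply hs.of_nonneg_of_le (fun _ => norm_nonneg _)
        intro k
        rcases eq_or_ne k 0 with hk | hk <;> simp [hk]
      · rw [tsum_eq_single 0 (fun b hb => by simp [hb])]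
        · simp
  | @insert a s' ha ih =>
      have ha1 : ‖c a * w‖ < 1 := h a (Finset.mem_insert_self a s')
      have ih' := ih fun j hj => h j (Finset.mem_insert_of_mem hj)
      set P := ∏ j ∈ s', PowerSeries.mk fun n => c j ^ n with hP
      set f : ℕ → ℂ := fun i => (c a * w) ^ i with hfdef
      set g : ℕ → ℂ := fun j => (PowerSeries.coeff j P) * w ^ j with hgdef
      have hf : Summable fun i => ‖f i‖ := by
        simpa [hfdef, norm_pow] using
          summable_geometric_of_lt_one (norm_nonneg (c a * w)) ha1
      have hg : Summable fun j => ‖g j‖ := ih'.1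
      have hfuneq : ∀ n, (PowerSeries.coeff n
          (∏ j ∈ insert a s', PowerSeries.mk fun m => c j ^ m)) * w ^ n
          = ∑ kl ∈ Finset.HasAntidiagonal.antidiagonal n, f kl.1 * g kl.2 := by
        intro n
        rw [Finset.prod_insert ha, PowerSeries.coeff_mul, Finset.sum_mul]
        refine Finset.sum_congr rfl fun kl hkl => ?_
        have hkln := Finset.HasAntidiagonal.mem_antidiagonal.mp hkl
        rw [PowerSeries.coeff_mk, ← hkln, pow_add, hfdef, hgdef]
        simp only [mul_pow]
        ring
      constructor
      · simpa only [hfuneq] using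
          summable_norm_sum_mul_antidiagonal_of_summable_norm hf hg
      · calc (∑' n, (PowerSeries.coeff n
              (∏ j ∈ insert a s', PowerSeries.mk fun m => c j ^ m)) * w ^ n)
              = ∑' n, ∑ kl ∈ Finset.HasAntidiagonal.antidiagonal n, f kl.1 * g kl.2 := by
                exact tsum_congr hfuneq
          _ = (∑' n, f n) * ∑' n, g n :=
              (tsum_mul_tsum_eq_tsum_sum_antidiagonal_of_summable_norm hf hg).symm
          _ = (1 - c a * w)⁻¹ * ∏ j ∈ s', (1 - c j * w)⁻¹ := by
              rw [tsum_geometric_of_norm_lt_one ha1, ih'.2]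
          _ = ∏ j ∈ insert a s', (1 - c j * w)⁻¹ := (Finset.prod_insert (f := fun j => ((1 : ℂ) - c j * w)⁻¹) ha).symm

/-- for `f(ℓ) = (1/det(I-zA))[ℓ] · λ^{-ℓ}` with `λ = lam 0` the unique dominant
(nonzero) eigenvalue, `lim_{ℓ→∞} f(ℓ) = lim_{z→1/λ} (1-zλ)/det(I - zA) = ∏_{j≥2}(1-λ_j/λ)⁻¹`. -/
theorem limit_normalized_coeff_eq_limit_zeta {N : ℕ}
    (A : Matrix (Fin (N + 1)) (Fin (N + 1)) ℂ) (lam : Fin (N + 1) → ℂ)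
    (hchar : A.charpoly = ∏ i, (Polynomial.X - Polynomial.C (lam i)))
    (hdom : ∀ j, j ≠ 0 → ‖lam j‖ < ‖lam 0‖)
    (hne : lam 0 ≠ 0) :
    ∃ L : ℂ,
      Filter.Tendsto (fun ℓ : ℕ => PowerSeries.coeff ℓ (graphZeta A) * (lam 0 ^ ℓ)⁻¹)
        Filter.atTop (nhds L) ∧
      Filter.Tendsto (fun z : ℂ => (1 - z * lam 0) / Matrix.det (1 - z • A))
        (nhdsWithin (lam 0)⁻¹ {(lam 0)⁻¹}ᶜ) (nhds L) ∧
      L = ∏ j ∈ Finset.univ.erase 0, (1 - lam j / lam 0)⁻¹ := by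
  classical
  set L : ℂ := ∏ j ∈ Finset.univ.erase 0, (1 - lam j / lam 0)⁻¹ with hL
  have habs0 : 0 < ‖lam 0‖ := by
    simpa [norm_pos_iff] using hne
  have hnorm : ∀ j ∈ Finset.univ.erase (0 : Fin (N + 1)), ‖lam j * (lam 0)⁻¹‖ < 1 := by
    intro j hj
    have hj0 : j ≠ 0 := (Finset.mem_erase.mp hj).1
    rw [norm_mul, norm_inv, ← div_eq_mul_inv, div_lt_one habs0]
    exact hdom j hj0
  have hkey := key_sum lam ((lam 0)⁻¹) (Finset.univ.erase 0) hnorm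
  set G := ∏ j ∈ Finset.univ.erase (0 : Fin (N + 1)), PowerSeries.mk fun n => lam j ^ n with hG
  set g : ℕ → ℂ := fun k => (PowerSeries.coeff k G) * ((lam 0)⁻¹) ^ k with hg
  have hLval : (∏ j ∈ Finset.univ.erase (0 : Fin (N + 1)), (1 - lam j * (lam 0)⁻¹)⁻¹) = L := by
    refine Finset.prod_congr rfl fun j _ => ?_
    rw [div_eq_mul_inv]
  have hgsum : HasSum g L := by
    have hs : Summable g := hkey.1.of_norm
    have := hs.hasSum
    rwa [hkey.2, hLval] at this
  refine ⟨L, ?_, ?_, rfl⟩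
  · -- coefficient limit
    have hZ : graphZeta A = (PowerSeries.mk fun n => lam 0 ^ n) * G := by
      rw [graphZeta_eq A lam hchar, ← Finset.mul_prod_erase Finset.univ _ (Finset.mem_univ 0)]
    have hps : ∀ ℓ : ℕ, PowerSeries.coeff ℓ (graphZeta A) * (lam 0 ^ ℓ)⁻¹
        = ∑ k ∈ Finset.range (ℓ + 1), g k := by
      intro ℓ
      rw [hZ, PowerSeries.coeff_mul, Finset.sum_mul,
        Finset.Nat.sum_antidiagonal_eq_sum_range_succ_mk]
      conv_rhs => rw [← Finset.sum_range_reflect]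
      refine Finset.sum_congr rfl fun k hk => ?_
      have hk' : k ≤ ℓ := Nat.lt_succ_iff.mp (Finset.mem_range.mp hk)
      have hred : ℓ + 1 - 1 - k = ℓ - k := by omega
      rw [hred, hg, PowerSeries.coeff_mk]
      have hpow : (lam 0 ^ ℓ)⁻¹ = (lam 0 ^ k)⁻¹ * ((lam 0)⁻¹) ^ (ℓ - k) := by
        rw [← inv_pow, ← inv_pow, ← pow_add, Nat.add_sub_cancel' hk', inv_pow]
      rw [hpow]
      have h0 : (lam 0 : ℂ) ^ k ≠ 0 := pow_ne_zero _ hne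
      field_simp
    have htend := hgsum.tendsto_sum_nat.comp (tendsto_add_atTop_nat 1)
    exact htend.congr fun ℓ => (hps ℓ).symm
  · -- z-limit
    have hF0 : ∀ j ∈ Finset.univ.erase (0 : Fin (N + 1)),
        (1 : ℂ) - (lam 0)⁻¹ * lam j ≠ 0 := by
      intro j hj h
      have hj0 : j ≠ 0 := (Finset.mem_erase.mp hj).1
      have : lam j = lam 0 := by
        field_simp at h
        linear_combination -h
      exact absurd (this ▸ hdom j hj0) (lt_irrefl _)
    have hcont : Filter.Tendsto (fun z : ℂ => ∏ j ∈ Finset.univ.erase (0 : Fin (N + 1)),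
        (1 - z * lam j)⁻¹) (nhds (lam 0)⁻¹)
        (nhds (∏ j ∈ Finset.univ.erase (0 : Fin (N + 1)), (1 - (lam 0)⁻¹ * lam j)⁻¹)) := by
      apply tendsto_finset_prod
      intro j hj
      exact Filter.Tendsto.inv₀
        ((continuous_const.sub (continuous_id.mul continuous_const)).tendsto _) (hF0 j hj)
    have hval : (∏ j ∈ Finset.univ.erase (0 : Fin (N + 1)), (1 - (lam 0)⁻¹ * lam j)⁻¹) = L := by
      refine Finset.prod_congr rfl fun j _ => ?_
      rw [div_eq_mul_inv, mul_comm]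
    rw [hval] at hcont
    refine tendsto_nhdsWithin_congr ?_ (hcont.mono_left nhdsWithin_le_nhds)
    intro z hz
    have hz' : z ≠ (lam 0)⁻¹ := hz
    have hz0 : (1 : ℂ) - z * lam 0 ≠ 0 := by
      intro h
      apply hz'
      have h1 : z * lam 0 = 1 := by linear_combination -h
      field_simp
      linear_combination h1
    rw [det_one_sub_smul_eq A lam hchar z,
      ← Finset.mul_prod_erase Finset.univ _ (Finset.mem_univ 0),
      div_eq_mul_inv, mul_inv, ← mul_assoc, mul_inv_cancel₀ hz0, one_mul,
      ← Finset.prod_inv_distrib]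
end

section
/- Let G be a finite undirected graph with real symmetric adjacency matrix A whose largest eigenvalue λ > 0 is simple, let eig denote the unit dominant eigenvector, and let η := ∏_{j=2}^{N}(1 - λ_j/λ). For a vertex i, define c({i}) := det(I - (1/λ) A_{∖{i}}), where A_{∖{i}} is A with row and column i deleted. Then c({i}) = η · eig(i)². -/
/-!
Write `A = U D Uᵀ` with `U` orthogonal and `D = diag(λ₁, …, λ_N)`, the columns of `U` ordered as
the `λ_j`. The principal minor `det(I - λ⁻¹A)_{∖{i}}` is the diagonal entry `adj(I - λ⁻¹A)ᵢᵢ`, and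
`adj(I - λ⁻¹A) = U adj(I - λ⁻¹D) Uᵀ`. Since `1 - λ₁/λ = 0`, the diagonal matrix `adj(I - λ⁻¹D)`
has the single nonzero entry `η` at position `(1, 1)`, so `adj(I - λ⁻¹A)ᵢᵢ = η U_{i1}²`. As `λ` is
simple, the unit eigenvector `eig` is `±` the first column of `U`, whence `U_{i1}² = eig(i)²`.
-/

open Matrix Polynomial

theorem Equiv.Perm.exists_comp_eq_of_map_univ_eq {ι γ : Type*} [Fintype ι] {f g : ι → γ}
    (h : Finset.univ.val.map f = Finset.univ.val.map g) : ∃ σ : Equiv.Perm ι, g ∘ σ = f := by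
  classical
  refine ⟨Equiv.ofFiberEquiv fun c => Fintype.equivOfCardEq ?_,
    funext (Equiv.ofFiberEquiv_map _)⟩
  have hc := congrArg (Multiset.count c) h
  simp only [Multiset.count_map, ← Finset.filter_val, Finset.card_val] at hc
  simp only [Fintype.card_subtype, eq_comm (b := c)]
  exact hc

namespace Matrix

variable {n R : Type*} [Fintype n] [DecidableEq n] [CommRing R]

omit [Fintype n] in
theorem submatrix_one_sub_smul {m : Type*} [DecidableEq m] (e : m → n)
    (he : Function.Injective e) (r : R) (A : Matrix n n R) :
    (1 - r • A).submatrix e e = 1 - r • A.submatrix e e := by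
  ext a b
  simp [one_apply, he.eq_iff]

theorem adjugate_apply_self_eq_det_submatrix {m : ℕ} (A : Matrix (Fin (m + 1)) (Fin (m + 1)) R)
    (i : Fin (m + 1)) :
    adjugate A i i = det (A.submatrix (fun x : {x // x ≠ i} => (x : Fin (m + 1))) (↑)) := by
  rw [adjugate_fin_succ_eq_det_submatrix, Even.neg_one_pow ⟨i, rfl⟩, one_mul,
    ← det_submatrix_equiv_self (finSuccAboveEquiv i), submatrix_submatrix]
  rfl

theorem adjugate_mul_mul_of_mul_eq_one {U V : Matrix n n R} (hUV : U * V = 1) (D : Matrix n n R) :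
    adjugate (U * D * V) = U * adjugate D * V := by
  have hVU : V * U = 1 := mul_eq_one_comm.mp hUV
  have hU : adjugate U = U.det • V := by
    rw [← Matrix.mul_one (adjugate U), ← hUV, ← Matrix.mul_assoc, adjugate_mul, smul_one_mul]
  have hV : adjugate V = V.det • U := by
    rw [← Matrix.mul_one (adjugate V), ← hVU, ← Matrix.mul_assoc, adjugate_mul, smul_one_mul]
  have hdet : V.det * U.det = 1 := by rw [← det_mul, hVU, det_one]
  rw [adjugate_mul_distrib, adjugate_mul_distrib, hU, hV, Matrix.smul_mul, Matrix.mul_smul,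
    Matrix.mul_smul, smul_smul, hdet, one_smul, Matrix.mul_assoc]

theorem adjugate_diagonal_of_eq_zero (d : n → R) {j : n} (hj : d j = 0) :
    adjugate (diagonal d) = diagonal (Pi.single j (∏ k ∈ Finset.univ.erase j, d k)) := by
  rw [adjugate_diagonal]
  congr 1
  ext k
  rcases eq_or_ne k j with rfl | hk
  · simp
  · rw [Pi.single_eq_of_ne hk]
    exact Finset.prod_eq_zero (Finset.mem_erase.mpr ⟨Ne.symm hk, Finset.mem_univ j⟩) hj

theorem mul_diagonal_single_mul_apply (U V : Matrix n n R) (j : n) (c : R) (i k : n) :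
    (U * diagonal (Pi.single j c) * V) i k = U i j * c * V j k := by
  rw [mul_apply, Finset.sum_eq_single j]
  · rw [mul_diagonal, Pi.single_eq_same]
  · intro x _ hx
    rw [mul_diagonal, Pi.single_eq_of_ne hx, mul_zero, zero_mul]
  · simp

theorem IsHermitian.exists_mem_unitaryGroup_eq_mul_diagonal_mul_star {𝕜 : Type*} [RCLike 𝕜]
    {A : Matrix n n 𝕜} (hA : A.IsHermitian) {lam : n → 𝕜}
    (hchar : A.charpoly = ∏ i, (X - C (lam i))) :
    ∃ U ∈ unitaryGroup n 𝕜, A = U * diagonal lam * star U := by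
  have hroots : Finset.univ.val.map (RCLike.ofReal ∘ hA.eigenvalues) = Finset.univ.val.map lam := by
    rw [← hA.roots_charpoly_eq_eigenvalues, hchar, Finset.prod_eq_multiset_prod,
      ← Function.comp_def (fun a => X - C a), ← Multiset.map_map, roots_multiset_prod_X_sub_C]
  obtain ⟨σ, hσ⟩ := Equiv.Perm.exists_comp_eq_of_map_univ_eq hroots
  set W : Matrix n n 𝕜 := (hA.eigenvectorUnitary : Matrix n n 𝕜)
  have hW : W ∈ unitaryGroup n 𝕜 := hA.eigenvectorUnitary.2
  refine ⟨W.submatrix id σ.symm, ?_, ?_⟩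
  · rw [mem_unitaryGroup_iff, star_eq_conjTranspose, conjTranspose_submatrix, submatrix_mul_equiv,
      submatrix_id_id, ← star_eq_conjTranspose, mem_unitaryGroup_iff.mp hW]
  · have hdiag : diagonal lam = (diagonal (lam ∘ σ)).submatrix σ.symm σ.symm := by
      rw [submatrix_diagonal_equiv, Function.comp_assoc, Equiv.self_comp_symm, Function.comp_id]
    rw [star_eq_conjTranspose, conjTranspose_submatrix, hdiag, submatrix_mul_equiv,
      submatrix_mul_equiv, submatrix_id_id, hσ, ← star_eq_conjTranspose]
    exact hA.spectral_theorem

theorem eq_smul_of_mulVec_eq_smul {K : Type*} [Field K] {A U V : Matrix n n K} {lam : n → K}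
    (hUV : U * V = 1) (hA : A = U * diagonal lam * V) {j : n} (hj : ∀ k ≠ j, lam k ≠ lam j)
    {v : n → K} (hv : A *ᵥ v = lam j • v) : v = (V *ᵥ v) j • fun i => U i j := by
  set w := V *ᵥ v
  have hw : diagonal lam *ᵥ w = lam j • w := by
    calc diagonal lam *ᵥ w = V *ᵥ (A *ᵥ v) := by
          rw [hA, mulVec_mulVec, mulVec_mulVec, ← Matrix.mul_assoc V, ← Matrix.mul_assoc V,
            mul_eq_one_comm.mp hUV, Matrix.one_mul]
      _ = lam j • w := by rw [hv, mulVec_smul]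
  have hw_single : w = Pi.single j (w j) := by
    funext k
    rcases eq_or_ne k j with rfl | hk
    · simp
    · have hk' := congrFun hw k
      rw [mulVec_diagonal, Pi.smul_apply, smul_eq_mul] at hk'
      rw [Pi.single_eq_of_ne hk]
      exact (mul_eq_mul_right_iff.mp hk').resolve_left (hj k hk)
  calc v = U *ᵥ w := by rw [mulVec_mulVec, hUV, one_mulVec]
    _ = w j • fun i => U i j := by
      rw [hw_single, mulVec_single]
      ext i
      simp [mul_comm]

theorem sum_sq_apply_eq_one_of_mem_unitaryGroup {U : Matrix n n ℝ} (hU : U ∈ unitaryGroup n ℝ)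
    (j : n) : ∑ i, U i j ^ 2 = 1 := by
  have := congrFun (congrFun (mem_unitaryGroup_iff'.mp hU) j) j
  simpa [mul_apply, sq] using this

theorem sq_apply_eq_of_mulVec_eq_smul {A U : Matrix n n ℝ} {lam : n → ℝ}
    (hU : U ∈ unitaryGroup n ℝ) (hA : A = U * diagonal lam * star U) {j : n}
    (hj : ∀ k ≠ j, lam k ≠ lam j) {v : n → ℝ} (hv : A *ᵥ v = lam j • v)
    (hunit : ∑ i, v i ^ 2 = 1) (i : n) : v i ^ 2 = U i j ^ 2 := by
  have hvU := eq_smul_of_mulVec_eq_smul (mem_unitaryGroup_iff.mp hU) hA hj hv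
  set c := (star U *ᵥ v) j
  have hc : c ^ 2 = 1 := by
    rw [← hunit, hvU]
    simp [mul_pow, ← Finset.mul_sum, sum_sq_apply_eq_one_of_mem_unitaryGroup hU]
  rw [hvU]
  simp [mul_pow, hc]

end Matrix

/-- for a finite undirected graph with symmetric adjacency matrix `A`, simple
largest eigenvalue `λ = lam 0 > 0` and unit dominant eigenvector `v = eig`, the single-vertex
centrality `c({i}) = det(I - (1/λ) A_{∖{i}})` equals `η · eig(i)²`, `η = ∏_{j≥2}(1-λ_j/λ)`. -/
theorem vertex_centrality_eq_eta_mul_eigvec_sq {N : ℕ}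
    (A : Matrix (Fin (N + 1)) (Fin (N + 1)) ℝ) (hA : A.IsSymm)
    (lam : Fin (N + 1) → ℝ)
    (hchar : A.charpoly = ∏ i, (Polynomial.X - Polynomial.C (lam i)))
    (hdom : ∀ j, j ≠ 0 → lam j < lam 0) (hpos : 0 < lam 0)
    (eig : Fin (N + 1) → ℝ) (hv : A.mulVec eig = lam 0 • eig)
    (hunit : ∑ i, eig i ^ 2 = 1) (i : Fin (N + 1)) :
    Matrix.det
        (1 - (lam 0)⁻¹ • A.submatrix (fun x : {x : Fin (N + 1) // x ≠ i} => (x : Fin (N + 1)))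
              (fun x : {x : Fin (N + 1) // x ≠ i} => (x : Fin (N + 1)))) =
      (∏ j ∈ Finset.univ.erase 0, (1 - lam j / lam 0)) * eig i ^ 2 := by
  have hH : A.IsHermitian := by rwa [IsHermitian, conjTranspose_eq_transpose_of_trivial]
  obtain ⟨U, hU, hAU⟩ := hH.exists_mem_unitaryGroup_eq_mul_diagonal_mul_star hchar
  set d : Fin (N + 1) → ℝ := fun j => 1 - lam j / lam 0
  have hd : d 0 = 0 := by simp [d, hpos.ne']
  have hM : 1 - (lam 0)⁻¹ • A = U * diagonal d * star U := by
    have hdiag : diagonal d = 1 - (lam 0)⁻¹ • diagonal lam := by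
      ext j k
      by_cases hjk : j = k <;> simp [d, hjk, div_eq_inv_mul]
    rw [hdiag, Matrix.mul_sub, Matrix.sub_mul, Matrix.mul_one, mem_unitaryGroup_iff.mp hU,
      Matrix.mul_smul, Matrix.smul_mul, ← hAU]
  have heig := sq_apply_eq_of_mulVec_eq_smul hU hAU (fun k hk => (hdom k hk).ne) hv hunit i
  rw [← submatrix_one_sub_smul _ Subtype.val_injective, ← adjugate_apply_self_eq_det_submatrix, hM,
    adjugate_mul_mul_of_mul_eq_one (mem_unitaryGroup_iff.mp hU), adjugate_diagonal_of_eq_zero d hd,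
    mul_diagonal_single_mul_apply, star_apply, star_trivial, heig]
  ring
end

section
/- Let A be a real symmetric nonnegative N × N matrix with simple largest eigenvalue λ > 0. Then for any vertex subset S ⊆ {1,...,N}, the centrality c(S) := det(I - (1/λ) A_{∖S}) satisfies 0 ≤ c(S) ≤ 1, where A_{∖S} is the principal submatrix of A obtained by deleting the rows and columns indexed by S. -/
open Matrix Polynomial in
lemma my_eval_charpoly {n : Type*} [Fintype n] [DecidableEq n] (M : Matrix n n ℝ) (μ : ℝ) :
    M.charpoly.eval μ = (μ • (1 : Matrix n n ℝ) - M).det := by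
  rw [Matrix.charpoly, eval_det, matPolyEquiv_charmatrix]
  simp [smul_one_eq_diagonal]

open Matrix Polynomial in
lemma my_charpoly_root_of_mem_spectrum {n : Type*} [Fintype n] [DecidableEq n]
    {M : Matrix n n ℝ} {μ : ℝ} (h : μ ∈ spectrum ℝ M) : M.charpoly.eval μ = 0 := by
  rw [my_eval_charpoly]
  rw [spectrum.mem_iff] at h
  by_contra hd
  apply h
  rw [Matrix.isUnit_iff_isUnit_det]
  have : algebraMap ℝ (Matrix n n ℝ) μ - M = μ • (1 : Matrix n n ℝ) - M := by
    rw [Algebra.algebraMap_eq_smul_one]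
  rw [this]
  exact isUnit_iff_ne_zero.2 hd

open Pointwise in
lemma my_spectrum_smul_one_sub {n : Type*} [Fintype n] [DecidableEq n] (M : Matrix n n ℝ)
    (c ν : ℝ) (h : ν ∈ spectrum ℝ (c • (1 : Matrix n n ℝ) - M)) :
    ∃ μ ∈ spectrum ℝ M, ν = c - μ := by
  rw [show c • (1 : Matrix n n ℝ) - M = algebraMap ℝ _ c - M from by
      rw [Algebra.algebraMap_eq_smul_one], ← spectrum.singleton_sub_eq] at h
  obtain ⟨a, ha, b, hb, hab⟩ := Set.mem_sub.mp h
  rw [Set.mem_singleton_iff] at ha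
  exact ⟨b, hb, by rw [← hab, ha]⟩

open Matrix in
lemma my_trace_eq_sum_eigenvalues {n : Type*} [Fintype n] [DecidableEq n]
    {M : Matrix n n ℝ} (hM : M.IsHermitian) : M.trace = ∑ i, hM.eigenvalues i := by
  simpa using hM.trace_eq_sum_eigenvalues

/-- for a real symmetric nonnegative matrix `A` with simple largest eigenvalue
`λ = lam 0 > 0`, the centrality `c(S) = det(I - (1/λ) A_{∖S})` of any vertex subset `S`
satisfies `0 ≤ c(S) ≤ 1`. -/
theorem centrality_mem_unit_interval {N : ℕ}
    (A : Matrix (Fin (N + 1)) (Fin (N + 1)) ℝ) (hA : A.IsSymm)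
    (hnonneg : ∀ i j, 0 ≤ A i j)
    (lam : Fin (N + 1) → ℝ)
    (hchar : A.charpoly = ∏ i, (Polynomial.X - Polynomial.C (lam i)))
    (hdom : ∀ j, j ≠ 0 → lam j < lam 0) (hpos : 0 < lam 0)
    (S : Finset (Fin (N + 1))) :
    0 ≤ Matrix.det
          (1 - (lam 0)⁻¹ • A.submatrix (fun x : {x : Fin (N + 1) // x ∉ S} => (x : Fin (N + 1)))
                (fun x : {x : Fin (N + 1) // x ∉ S} => (x : Fin (N + 1)))) ∧
    Matrix.det
        (1 - (lam 0)⁻¹ • A.submatrix (fun x : {x : Fin (N + 1) // x ∉ S} => (x : Fin (N + 1)))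
              (fun x : {x : Fin (N + 1) // x ∉ S} => (x : Fin (N + 1)))) ≤ 1 := by
  classical
  have hAH : A.IsHermitian := by
    rwa [Matrix.IsHermitian, Matrix.conjTranspose_eq_transpose_of_trivial]
  -- every real spectrum element is ≤ lam 0
  have hspec : ∀ μ ∈ spectrum ℝ A, μ ≤ lam 0 := by
    intro μ hμ
    have h0 := my_charpoly_root_of_mem_spectrum hμ
    rw [hchar] at h0
    simp only [Polynomial.eval_prod, Polynomial.eval_sub, Polynomial.eval_X,
      Polynomial.eval_C] at h0
    obtain ⟨i, -, hi⟩ := Finset.prod_eq_zero_iff.mp h0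
    have hμi : μ = lam i := by linarith [sub_eq_zero.mp hi]
    by_cases h : i = 0
    · rw [hμi, h]
    · exact le_of_lt (hμi ▸ hdom i h)
  -- lam 0 • 1 - A is positive semidefinite
  have hP : (lam 0 • (1 : Matrix (Fin (N+1)) (Fin (N+1)) ℝ) - A).IsHermitian := by
    show Matrix.conjTranspose _ = _
    rw [Matrix.conjTranspose_eq_transpose_of_trivial]
    simp [Matrix.transpose_smul, hA.eq]
  have hPpsd : (lam 0 • (1 : Matrix (Fin (N+1)) (Fin (N+1)) ℝ) - A).PosSemidef := by
    apply hP.posSemidef_iff_eigenvalues_nonneg.mpr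
    intro i
    have hmem := hP.eigenvalues_mem_spectrum_real i
    obtain ⟨μ, hμ, heq⟩ := my_spectrum_smul_one_sub A (lam 0) _ hmem
    have := hspec μ hμ
    rw [heq, Pi.zero_apply]
    linarith
  -- Rayleigh bound
  have hray : ∀ y : Fin (N+1) → ℝ,
      dotProduct y (A.mulVec y) ≤ lam 0 * dotProduct y y := by
    intro y
    have h := hPpsd.dotProduct_mulVec_nonneg y
    simp only [Matrix.sub_mulVec, Matrix.smul_mulVec, Matrix.one_mulVec,
      dotProduct_sub, dotProduct_smul, star_trivial, smul_eq_mul] at h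
    linarith
  -- the submatrix
  set B : Matrix {x : Fin (N+1) // x ∉ S} {x : Fin (N+1) // x ∉ S} ℝ :=
    A.submatrix (fun x : {x : Fin (N + 1) // x ∉ S} => (x : Fin (N + 1)))
      (fun x : {x : Fin (N + 1) // x ∉ S} => (x : Fin (N + 1))) with hB
  have hBH : B.IsHermitian := hAH.submatrix _
  have hMH : ((1 : Matrix {x : Fin (N+1) // x ∉ S} {x : Fin (N+1) // x ∉ S} ℝ)
      - (lam 0)⁻¹ • B).IsHermitian := by
    show Matrix.conjTranspose _ = _
    rw [Matrix.conjTranspose_eq_transpose_of_trivial]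
    have hBt : Matrix.transpose B = B := by
      rw [← Matrix.conjTranspose_eq_transpose_of_trivial]
      exact hBH.eq
    simp [Matrix.transpose_smul, hBt]
  -- sum over subtype helper
  have hsum : ∀ g : Fin (N+1) → ℝ, (∀ i ∈ S, g i = 0) →
      ∑ i, g i = ∑ i : {x : Fin (N+1) // x ∉ S}, g i := by
    intro g hg
    rw [← Finset.sum_compl_add_sum S g, Finset.sum_eq_zero hg, add_zero]
    exact Finset.sum_subtype Sᶜ (fun x => Finset.mem_compl) g
  have hMpsd : ((1 : Matrix {x : Fin (N+1) // x ∉ S} {x : Fin (N+1) // x ∉ S} ℝ)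
      - (lam 0)⁻¹ • B).PosSemidef := by
    refine .of_dotProduct_mulVec_nonneg hMH fun x => ?_
    let y : Fin (N+1) → ℝ := fun i => if h : i ∈ S then 0 else x ⟨i, h⟩
    have hyval : ∀ i : {x : Fin (N+1) // x ∉ S}, y (i : Fin (N+1)) = x i :=
      fun i => dif_neg i.2
    have hyzero : ∀ i ∈ S, y i = 0 := fun i hi => dif_pos hi
    have hyy : dotProduct y y = dotProduct x x := by
      show ∑ i, y i * y i = ∑ i, x i * x i
      rw [hsum (fun i => y i * y i)
        (fun i hi => by show y i * y i = 0; rw [hyzero i hi]; ring)]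
      exact Finset.sum_congr rfl fun i _ => by rw [hyval i]
    have hyA : dotProduct y (A.mulVec y) = dotProduct x (B.mulVec x) := by
      show ∑ i, y i * (∑ j, A i j * y j) = ∑ i, x i * (∑ j, B i j * x j)
      rw [hsum (fun i => y i * (∑ j, A i j * y j))
        (fun i hi => by show y i * _ = 0; rw [hyzero i hi]; ring)]
      refine Finset.sum_congr rfl fun i _ => ?_
      show y (i : Fin (N+1)) * _ = _
      rw [hyval i]
      congr 1
      rw [hsum (fun j => A (i : Fin (N+1)) j * y j)
        (fun j hj => by show A _ j * y j = 0; rw [hyzero j hj]; ring)]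
      exact Finset.sum_congr rfl fun j _ => by show A _ _ * y _ = _; rw [hyval j]; rfl
    have hA2 := hray y
    rw [hyy, hyA] at hA2
    simp only [Matrix.sub_mulVec, Matrix.smul_mulVec, Matrix.one_mulVec,
      dotProduct_sub, dotProduct_smul, star_trivial, smul_eq_mul]
    have hinv : 0 < (lam 0)⁻¹ := inv_pos.mpr hpos
    have h5 : (lam 0)⁻¹ * (dotProduct x (B.mulVec x))
        ≤ (lam 0)⁻¹ * (lam 0 * (dotProduct x x)) :=
      mul_le_mul_of_nonneg_left hA2 hinv.le
    rw [← mul_assoc, inv_mul_cancel₀ hpos.ne', one_mul] at h5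
    linarith
  have hz0 : ∀ i, 0 ≤ hMH.eigenvalues i := hMpsd.eigenvalues_nonneg
  have hdet : Matrix.det ((1 : Matrix {x : Fin (N+1) // x ∉ S} {x : Fin (N+1) // x ∉ S} ℝ)
      - (lam 0)⁻¹ • B) = ∏ i, hMH.eigenvalues i := by
    simpa using hMH.det_eq_prod_eigenvalues
  constructor
  · rw [hdet]
    exact Finset.prod_nonneg fun i _ => hz0 i
  · by_cases hcard : IsEmpty {x : Fin (N+1) // x ∉ S}
    · rw [Matrix.det_isEmpty]
    · rw [not_isEmpty_iff] at hcard
      have hn : 0 < Fintype.card {x : Fin (N+1) // x ∉ S} := Fintype.card_pos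
      set n := Fintype.card {x : Fin (N+1) // x ∉ S} with hnn
      set z := hMH.eigenvalues with hz
      have htr : ∑ i, z i ≤ (n : ℝ) := by
        have h1 := my_trace_eq_sum_eigenvalues hMH
        have h2 : ((1 : Matrix {x : Fin (N+1) // x ∉ S} {x : Fin (N+1) // x ∉ S} ℝ)
            - (lam 0)⁻¹ • B).trace = (n : ℝ) - (lam 0)⁻¹ * B.trace := by
          rw [Matrix.trace_sub, Matrix.trace_smul, Matrix.trace_one, smul_eq_mul]
        have h3 : 0 ≤ B.trace := by
          rw [Matrix.trace]
          exact Finset.sum_nonneg fun i _ => hnonneg _ _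
        have hinv : 0 ≤ (lam 0)⁻¹ := (inv_pos.mpr hpos).le
        rw [h2] at h1
        rw [← h1]
        nlinarith
      rw [hdet]
      have hw : ∑ _i : {x : Fin (N+1) // x ∉ S}, (n : ℝ)⁻¹ = 1 := by
        rw [Finset.sum_const, Finset.card_univ, ← hnn, nsmul_eq_mul,
          mul_inv_cancel₀ (Nat.cast_ne_zero.mpr hn.ne')]
      have hgm := Real.geom_mean_le_arith_mean_weighted Finset.univ
        (fun _ => (n : ℝ)⁻¹) z (fun _ _ => by positivity) hw (fun i _ => hz0 i)
      have hrhs : ∑ i, (n : ℝ)⁻¹ * z i ≤ 1 := by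
        rw [← Finset.mul_sum]
        calc (n : ℝ)⁻¹ * ∑ i, z i ≤ (n : ℝ)⁻¹ * n :=
          mul_le_mul_of_nonneg_left htr (by positivity)
        _ = 1 := inv_mul_cancel₀ (Nat.cast_ne_zero.mpr hn.ne')
      have hprod1 : ∏ i, z i ^ ((n : ℝ)⁻¹) ≤ 1 := le_trans hgm hrhs
      have hprodnn : 0 ≤ ∏ i, z i ^ ((n : ℝ)⁻¹) :=
        Finset.prod_nonneg fun i _ => Real.rpow_nonneg (hz0 i) _
      have key : ∏ i, z i = (∏ i, z i ^ ((n : ℝ)⁻¹)) ^ n := by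
        rw [← Finset.prod_pow]
        refine Finset.prod_congr rfl fun i _ => ?_
        rw [← Real.rpow_natCast (z i ^ ((n : ℝ)⁻¹)) n, ← Real.rpow_mul (hz0 i),
          inv_mul_cancel₀ (Nat.cast_ne_zero.mpr hn.ne'), Real.rpow_one]
      rw [key]
      exact pow_le_one₀ hprodnn hprod1
end

section
/- Let A be an N × N complex matrix with eigenvalues λ₁, ..., λ_N where λ := λ₁ satisfies |λ| > |λ_j| for j ≥ 2 and λ ≠ 0. Fix a polynomial q(z) = Σ_d a_d z^{k_d} (finitely many terms). Then Σ_d a_d λ^{-k_d} (h_{ℓ - k_d}(λ₁,...,λ_N) λ^{-(ℓ-k_d)} - h_ℓ(λ₁,...,λ_N) λ^{-ℓ}) → 0 as ℓ → ∞, where h_m denotes the complete homogeneous symmetric polynomial of degree m. Consequently Σ_d a_d h_{ℓ-k_d}(λ₁,...,λ_N) ∼ q(1/λ) · h_ℓ(λ₁,...,λ_N) as ℓ → ∞, provided q(1/λ) ≠ 0. -/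
/-- The complete homogeneous symmetric polynomial `h_ℓ(λ₁, …, λ_N)`:
sum over all tuples of nonnegative integers summing to `ℓ` of the corresponding monomial. -/
noncomputable def hsym {N : ℕ} (lam : Fin N → ℂ) (ℓ : ℕ) : ℂ :=
  ∑ k ∈ Finset.Nat.antidiagonalTuple N ℓ, ∏ i, lam i ^ k i

lemma hsym_cons {n : ℕ} (x : ℂ) (μ : Fin n → ℂ) (ℓ : ℕ) :
    hsym (Fin.cons x μ) ℓ = ∑ p ∈ Finset.HasAntidiagonal.antidiagonal ℓ, x ^ p.1 * hsym μ p.2 := by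
  unfold hsym
  simp_rw [Finset.mul_sum]
  rw [Finset.sum_sigma']
  refine Finset.sum_nbij' (fun t => ⟨(t 0, ∑ i : Fin n, t i.succ), Fin.tail t⟩)
    (fun q => Fin.cons q.1.1 q.2) ?_ ?_ ?_ ?_ ?_
  · intro t ht
    rw [Finset.Nat.mem_antidiagonalTuple] at ht
    refine Finset.mem_sigma.mpr ⟨?_, ?_⟩
    · rw [Finset.HasAntidiagonal.mem_antidiagonal]
      rw [← ht, Fin.sum_univ_succ]
    · exact Finset.Nat.mem_antidiagonalTuple.mpr rfl
  · intro q hq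
    rw [Finset.mem_sigma, Finset.HasAntidiagonal.mem_antidiagonal, Finset.Nat.mem_antidiagonalTuple] at hq
    rw [Finset.Nat.mem_antidiagonalTuple, Fin.sum_univ_succ]
    simp [hq.2, hq.1]
  · intro t ht
    exact Fin.cons_self_tail t
  · intro q hq
    rw [Finset.mem_sigma, Finset.HasAntidiagonal.mem_antidiagonal, Finset.Nat.mem_antidiagonalTuple] at hq
    obtain ⟨⟨i, j⟩, s⟩ := q
    simp only [Fin.cons_succ, Fin.cons_zero, Fin.tail_cons] at hq ⊢
    simp [hq.2]
  · intro t ht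
    rw [Fin.prod_univ_succ]
    simp [Fin.tail]

lemma hsym_key : ∀ (n : ℕ) (μ : Fin n → ℂ) (x : ℂ), (∀ j, ‖μ j * x‖ < 1) →
    Summable (fun k => ‖hsym μ k * x ^ k‖) ∧
    (∑' k, hsym μ k * x ^ k) * ∏ j, (1 - μ j * x) = 1 := by
  intro n
  induction n with
  | zero =>
    intro μ x _
    have h0 : ∀ k : ℕ, hsym μ k * x ^ k = if k = 0 then 1 else 0 := by
      intro k
      cases k with
      | zero => simp [hsym]
      | succ k => simp [hsym]
    constructor
    · apply summable_of_finite_support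
      apply Set.Finite.subset (Set.finite_singleton 0)
      intro k hk
      by_contra h
      simp [Function.support, h0, h] at hk
    · simp_rw [h0]
      rw [tsum_eq_single 0 (by intro b hb; simp [hb])]
      simp
  | succ n ih =>
    intro μ x hμ
    have hx0 : ‖μ 0 * x‖ < 1 := hμ 0
    have hν : ∀ j, ‖Fin.tail μ j * x‖ < 1 := fun j => hμ j.succ
    obtain ⟨hsumν, hprodν⟩ := ih (Fin.tail μ) x hν
    have hgeo : Summable (fun k : ℕ => ‖(μ 0 * x) ^ k‖) :=
      summable_norm_geometric_of_norm_lt_one hx0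
    have hrepr : ∀ ℓ : ℕ, hsym μ ℓ * x ^ ℓ =
        ∑ p ∈ Finset.HasAntidiagonal.antidiagonal ℓ, (μ 0 * x) ^ p.1 * (hsym (Fin.tail μ) p.2 * x ^ p.2) := by
      intro ℓ
      conv_lhs => rw [← Fin.cons_self_tail μ, hsym_cons]
      rw [Finset.sum_mul]
      refine Finset.sum_congr rfl fun p hp => ?_
      rw [Finset.HasAntidiagonal.mem_antidiagonal] at hp
      rw [← hp, pow_add, mul_pow]
      ring
    have hsum : Summable (fun ℓ => ‖hsym μ ℓ * x ^ ℓ‖) := by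
      have h2 := summable_norm_sum_mul_antidiagonal_of_summable_norm
        (f := fun k => (μ 0 * x) ^ k) (g := fun k => hsym (Fin.tail μ) k * x ^ k) hgeo hsumν
      exact h2.congr fun ℓ => (congrArg norm (hrepr ℓ)).symm
    refine ⟨hsum, ?_⟩
    have htsum : (∑' ℓ, hsym μ ℓ * x ^ ℓ) =
        (∑' k, (μ 0 * x) ^ k) * ∑' k, hsym (Fin.tail μ) k * x ^ k := by
      rw [tsum_mul_tsum_eq_tsum_sum_antidiagonal_of_summable_norm hgeo hsumν]
      exact tsum_congr hrepr
    have hne : (1 : ℂ) - μ 0 * x ≠ 0 := by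
      intro h
      have : (1 : ℂ) = μ 0 * x := by linear_combination h
      rw [← this] at hx0; simp at hx0
    rw [htsum, tsum_geometric_of_norm_lt_one hx0, Fin.prod_univ_succ]
    calc (1 - μ 0 * x)⁻¹ * (∑' k, hsym (Fin.tail μ) k * x ^ k) *
          ((1 - μ 0 * x) * ∏ j, (1 - Fin.tail μ j * x))
        = ((1 - μ 0 * x)⁻¹ * (1 - μ 0 * x)) *
          ((∑' k, hsym (Fin.tail μ) k * x ^ k) * ∏ j, (1 - Fin.tail μ j * x)) := by ring
      _ = 1 := by rw [inv_mul_cancel₀ hne, hprodν, one_mul]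

/-- asymptotic sieve estimate.  If `λ = lam 0` strictly dominates the other
eigenvalues and `q(z) = Σ_d a_d z^{k_d}`, then
`Σ_d a_d λ^{-k_d} (h_{ℓ-k_d} λ^{-(ℓ-k_d)} - h_ℓ λ^{-ℓ}) → 0`, and consequently
`Σ_d a_d h_{ℓ-k_d} ∼ q(1/λ) h_ℓ` as `ℓ → ∞` provided `q(1/λ) ≠ 0`. -/
theorem sieve_error_vanishes_and_asymptotic {N m : ℕ} (lam : Fin (N + 1) → ℂ)
    (hdom : ∀ j, j ≠ 0 → ‖lam j‖ < ‖lam 0‖)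
    (hne : lam 0 ≠ 0) (a : Fin m → ℂ) (kd : Fin m → ℕ) :
    Filter.Tendsto
      (fun ℓ : ℕ => ∑ d, a d * (lam 0 ^ kd d)⁻¹ *
        (hsym lam (ℓ - kd d) * (lam 0 ^ (ℓ - kd d))⁻¹ - hsym lam ℓ * (lam 0 ^ ℓ)⁻¹))
      Filter.atTop (nhds 0) ∧
    ((∑ d, a d * ((lam 0)⁻¹) ^ kd d) ≠ 0 →
      Asymptotics.IsEquivalent Filter.atTop
        (fun ℓ : ℕ => ∑ d, a d * hsym lam (ℓ - kd d))
        (fun ℓ : ℕ => (∑ d, a d * ((lam 0)⁻¹) ^ kd d) * hsym lam ℓ)) := by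
  set x : ℂ := (lam 0)⁻¹ with hxdef
  set ν : Fin N → ℂ := Fin.tail lam with hνdef
  have hxne : x ≠ 0 := inv_ne_zero hne
  have hlx : lam 0 * x = 1 := mul_inv_cancel₀ hne
  have hν : ∀ j, ‖ν j * x‖ < 1 := by
    intro j
    have h1 : ‖lam j.succ‖ < ‖lam 0‖ := hdom j.succ (Fin.succ_ne_zero j)
    have h2 : (0:ℝ) < ‖lam 0‖ := by
      simpa using (norm_pos_iff.mpr hne)
    rw [norm_mul]
    calc ‖ν j‖ * ‖x‖ < ‖lam 0‖ * ‖x‖ := by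
          apply mul_lt_mul_of_pos_right
          · simpa [hνdef, Fin.tail] using h1
          · rw [hxdef, norm_inv]
            simpa using inv_pos.mpr h2
      _ = 1 := by rw [← norm_mul, hlx, norm_one]
  obtain ⟨hsumν, hprodν⟩ := hsym_key N ν x hν
  -- f ℓ = partial sum
  set f : ℕ → ℂ := fun ℓ => hsym lam ℓ * (lam 0 ^ ℓ)⁻¹ with hfdef
  have hfval : ∀ ℓ, f ℓ = ∑ k ∈ Finset.range (ℓ + 1), hsym ν k * x ^ k := by
    intro ℓ
    have : hsym lam ℓ = ∑ p ∈ Finset.HasAntidiagonal.antidiagonal ℓ, (lam 0) ^ p.1 * hsym ν p.2 := by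
      conv_lhs => rw [← Fin.cons_self_tail lam, hsym_cons]
    simp only [hfdef]
    simp only [this, Finset.sum_mul, ← inv_pow, ← hxdef]
    calc ∑ p ∈ Finset.HasAntidiagonal.antidiagonal ℓ, lam 0 ^ p.1 * hsym ν p.2 * x ^ ℓ
        = ∑ p ∈ Finset.HasAntidiagonal.antidiagonal ℓ, hsym ν p.2 * x ^ p.2 := by
          refine Finset.sum_congr rfl fun p hp => ?_
          rw [Finset.HasAntidiagonal.mem_antidiagonal] at hp
          rw [← hp, pow_add, ← mul_assoc]
          have : lam 0 ^ p.1 * hsym ν p.2 * x ^ p.1 =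
              (lam 0 * x) ^ p.1 * hsym ν p.2 := by rw [mul_pow]; ring
          rw [mul_assoc, mul_comm (hsym ν p.2), ← mul_assoc, this, hlx, one_pow, one_mul]
          ring
      _ = ∑ k ∈ Finset.range (ℓ + 1), hsym ν (ℓ - k) * x ^ (ℓ - k) :=
          Finset.Nat.sum_antidiagonal_eq_sum_range_succ (fun i j => hsym ν j * x ^ j) ℓ
      _ = ∑ k ∈ Finset.range (ℓ + 1), hsym ν k * x ^ k := by
          rw [← Finset.sum_range_reflect (fun k => hsym ν k * x ^ k) (ℓ + 1)]
          simp
  set L : ℂ := ∑' k, hsym ν k * x ^ k with hLdef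
  have hsumν' : Summable (fun k => hsym ν k * x ^ k) := by
    exact Summable.of_norm hsumν
  have hfL : Filter.Tendsto f Filter.atTop (nhds L) := by
    have h1 : Filter.Tendsto (fun n => ∑ k ∈ Finset.range n, hsym ν k * x ^ k)
        Filter.atTop (nhds L) := hsumν'.hasSum.tendsto_sum_nat
    exact (h1.comp (Filter.tendsto_add_atTop_nat 1)).congr fun ℓ => (hfval ℓ).symm
  have hLne : L ≠ 0 := by
    intro h
    rw [h, zero_mul] at hprodν
    exact zero_ne_one hprodν
  constructor
  · have : Filter.Tendsto
        (fun ℓ : ℕ => ∑ d, a d * (lam 0 ^ kd d)⁻¹ * (f (ℓ - kd d) - f ℓ))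
        Filter.atTop (nhds (∑ d : Fin m, a d * (lam 0 ^ kd d)⁻¹ * (L - L))) := by
      apply tendsto_finset_sum
      intro d _
      apply Filter.Tendsto.const_mul
      exact (hfL.comp (Filter.tendsto_sub_atTop_nat (kd d))).sub hfL
    simpa using this
  · intro hQ
    set Q : ℂ := ∑ d, a d * x ^ kd d with hQdef
    have hQL : Q * L ≠ 0 := mul_ne_zero hQ hLne
    -- eventually f ℓ ≠ 0 and ℓ ≥ all kd
    have hev : ∀ᶠ ℓ : ℕ in Filter.atTop, f ℓ ≠ 0 :=
      hfL.eventually_ne hLne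
    have hev2 : ∀ᶠ ℓ : ℕ in Filter.atTop, ∀ d, kd d ≤ ℓ :=
      Filter.eventually_all.mpr fun d => Filter.eventually_ge_atTop (kd d)
    have hhsym_ne : ∀ᶠ ℓ : ℕ in Filter.atTop, hsym lam ℓ ≠ 0 := by
      filter_upwards [hev] with ℓ hℓ h0
      apply hℓ
      rw [hfdef]; simp [h0]
    set u : ℕ → ℂ := fun ℓ => ∑ d, a d * hsym lam (ℓ - kd d) with hudef
    set v : ℕ → ℂ := fun ℓ => Q * hsym lam ℓ with hvdef
    have hrat : ∀ᶠ ℓ : ℕ in Filter.atTop, u ℓ / v ℓ =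
        (∑ d, a d * x ^ kd d * f (ℓ - kd d)) / (Q * f ℓ) := by
      filter_upwards [hev2] with ℓ hℓ
      have hnum : u ℓ = lam 0 ^ ℓ * ∑ d, a d * x ^ kd d * f (ℓ - kd d) := by
        rw [hudef, Finset.mul_sum]
        refine Finset.sum_congr rfl fun d _ => ?_
        have h1 : f (ℓ - kd d) * lam 0 ^ (ℓ - kd d) = hsym lam (ℓ - kd d) := by
          simp only [hfdef]
          exact inv_mul_cancel_right₀ (pow_ne_zero _ hne) _
        rw [← h1]
        have h2 : (lam 0 : ℂ) ^ (ℓ - kd d) = lam 0 ^ ℓ * x ^ kd d := by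
          rw [hxdef, inv_pow]
          exact pow_sub₀ _ hne (hℓ d)
        rw [h2]; ring
      have hden : v ℓ = lam 0 ^ ℓ * (Q * f ℓ) := by
        have h1 : f ℓ * lam 0 ^ ℓ = hsym lam ℓ := by
          simp only [hfdef]
          exact inv_mul_cancel_right₀ (pow_ne_zero _ hne) _
        simp only [hvdef]
        rw [← h1]
        ring
      rw [hnum, hden, mul_div_mul_left _ _ (pow_ne_zero _ hne)]
    have hto1 : Filter.Tendsto (fun ℓ => u ℓ / v ℓ) Filter.atTop (nhds 1) := by
      rw [Filter.tendsto_congr' hrat]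
      have hnumlim : Filter.Tendsto (fun ℓ => ∑ d, a d * x ^ kd d * f (ℓ - kd d))
          Filter.atTop (nhds (∑ d : Fin m, a d * x ^ kd d * L)) := by
        apply tendsto_finset_sum
        intro d _
        exact (hfL.comp (Filter.tendsto_sub_atTop_nat (kd d))).const_mul _
      have hdenlim : Filter.Tendsto (fun ℓ => Q * f ℓ) Filter.atTop (nhds (Q * L)) :=
        hfL.const_mul _
      have := hnumlim.div hdenlim hQL
      have hsum : (∑ d : Fin m, a d * x ^ kd d * L) = Q * L := by
        rw [hQdef, Finset.sum_mul]
      rw [hsum, div_self hQL] at this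
      exact this
    exact Asymptotics.isEquivalent_of_tendsto_one hto1
end

section
/- In the trace monoid of hikes on a finite digraph G (generated by simple cycles, with disjoint cycles commuting), the Möbius function μ, defined as the multiplicative inverse of the constant function 1 under the Dirichlet-type convolution, satisfies: μ(h) = (-1)^{Ω(h)} if h is a self-avoiding hike (a product of pairwise vertex-disjoint simple cycles, Ω(h) counting the factors), and μ(h) = 0 otherwise. -/
/-- A simple cycle of a digraph `Adj` on `Fin N`: a nonempty vertex set `verts` together with a
permutation acting as a single cyclic orbit on `verts` (identity elsewhere), each step of which
follows an edge of the digraph.  Fixed points of `perm` inside a singleton `verts` are loops. -/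
structure SimpleCycle (N : ℕ) (Adj : Fin N → Fin N → Prop) where
  verts : Finset (Fin N)
  perm : Equiv.Perm (Fin N)
  nonempty : verts.Nonempty
  fixes : ∀ x, x ∉ verts → perm x = x
  cyclic : ∀ x ∈ verts, ∀ y ∈ verts, ∃ k : ℕ, (perm ^ k) x = y
  edges : ∀ x ∈ verts, Adj x (perm x)

/-- The length of a simple cycle: the number of its vertices (= number of its edges). -/
def SimpleCycle.length {N : ℕ} {Adj : Fin N → Fin N → Prop} (c : SimpleCycle N Adj) : ℕ :=
  c.verts.card

/-- Generating relation of the trace monoid of hikes: two adjacent simple cycles may be swapped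
iff they are vertex-disjoint. -/
def hikeRel {N : ℕ} (Adj : Fin N → Fin N → Prop)
    (x y : FreeMonoid (SimpleCycle N Adj)) : Prop :=
  ∃ a b : SimpleCycle N Adj, Disjoint a.verts b.verts ∧
    x = FreeMonoid.of a * FreeMonoid.of b ∧ y = FreeMonoid.of b * FreeMonoid.of a

/-- The congruence on the free monoid over simple cycles generated by commutation of
vertex-disjoint cycles. -/
def hikeCon {N : ℕ} (Adj : Fin N → Fin N → Prop) : Con (FreeMonoid (SimpleCycle N Adj)) :=
  conGen (hikeRel Adj)

/-- The trace monoid of hikes on the digraph `Adj`. -/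
def Hike {N : ℕ} (Adj : Fin N → Fin N → Prop) : Type _ := (hikeCon Adj).Quotient

instance {N : ℕ} (Adj : Fin N → Fin N → Prop) : Monoid (Hike Adj) :=
  inferInstanceAs (Monoid (hikeCon Adj).Quotient)

/-- The hike determined by a word (list) of simple cycles. -/
def Hike.mk {N : ℕ} {Adj : Fin N → Fin N → Prop} (l : List (SimpleCycle N Adj)) : Hike Adj :=
  (hikeCon Adj).mk' (FreeMonoid.ofList l)

/-- `h` is a hike of length `ℓ`: some (hence any) word representing it has total length `ℓ`. -/
def Hike.lengthIs {N : ℕ} {Adj : Fin N → Fin N → Prop} (h : Hike Adj) (ℓ : ℕ) : Prop :=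
  ∃ l : List (SimpleCycle N Adj), h = Hike.mk l ∧ (l.map fun c => c.length).sum = ℓ


open scoped Classical

/-!
Let `ν = Hike.moebius` be `(-1)^{Ω(h)}` on self-avoiding hikes and `0` elsewhere. A factorization
`h = d * e` other than `(h, 1)` has `Ω(d) < Ω(h)`, so the convolution identity determines `μ` by
induction on `Ω`, and it suffices that `ν` satisfies it.

Erasing the first occurrence of a cycle is well defined on hikes, so hikes are left cancellative
and a factorization `h = d * e` is determined by `d`. Two distinct cycles that can both be moved to
the front of `h` are disjoint, since otherwise the projection of `h` onto these two letters would
start with both. Hence the self-avoiding left factors `d` of `h` correspond to the subsets `S` of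
the set `I(h)` of initial cycles of `h`, with `Ω(d) = |S|`, and the convolution of `ν` at `h` is
`∑_{S ⊆ I(h)} (-1)^{|S|}`, which vanishes unless `I(h) = ∅`, i.e. `h = 1`.
-/

theorem eq_of_finsum_factorizations_eq {M G : Type*} [Monoid M] [AddCommGroup G]
    (ℓ : M → ℕ) (hℓ : ∀ x y, ℓ (x * y) = ℓ x + ℓ y) (hℓ₀ : ∀ x, ℓ x = 0 → x = 1)
    [∀ h : M, Finite {p : M × M // p.1 * p.2 = h}] {f g : M → G}
    (hfg : ∀ h : M, ∑ᶠ p : {p : M × M // p.1 * p.2 = h}, f p.1.1 =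
      ∑ᶠ p : {p : M × M // p.1 * p.2 = h}, g p.1.1) :
    f = g := by
  funext h
  induction hn : ℓ h using Nat.strong_induction_on generalizing h with
  | _ n ih =>
  have := Fintype.ofFinite {p : M × M // p.1 * p.2 = h}
  have hsum : ∑ p : {p : M × M // p.1 * p.2 = h}, (f p.1.1 - g p.1.1) = 0 := by
    rw [Finset.sum_sub_distrib, ← finsum_eq_sum_of_fintype, ← finsum_eq_sum_of_fintype, hfg,
      sub_self]
  rw [Finset.sum_eq_single ⟨(h, 1), mul_one h⟩ ?_ (by simp)] at hsum
  · exact sub_eq_zero.mp hsum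
  rintro ⟨⟨d, e⟩, hde⟩ - hne
  have he : e ≠ 1 := by
    rintro rfl
    exact hne (Subtype.ext (Prod.ext (by simpa using hde) rfl))
  have hd : ℓ d < n := by
    have hℓde := hℓ d e
    rw [show d * e = h from hde, hn] at hℓde
    have := Nat.pos_of_ne_zero (mt (hℓ₀ e) he)
    omega
  rw [ih _ hd d rfl, sub_self]

namespace SimpleCycle

variable {N : ℕ} {Adj : Fin N → Fin N → Prop}

def VertexDisjoint (a b : SimpleCycle N Adj) : Prop := Disjoint a.verts b.verts

theorem VertexDisjoint.symm {a b : SimpleCycle N Adj} (h : VertexDisjoint a b) :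
    VertexDisjoint b a :=
  Disjoint.symm h

theorem VertexDisjoint.ne {a b : SimpleCycle N Adj} (h : VertexDisjoint a b) : a ≠ b := by
  rintro rfl
  exact a.nonempty.ne_empty (disjoint_self.mp h)

theorem nodup_of_pairwise_vertexDisjoint {l : List (SimpleCycle N Adj)}
    (hl : l.Pairwise VertexDisjoint) : l.Nodup :=
  hl.imp VertexDisjoint.ne

noncomputable instance : Fintype (SimpleCycle N Adj) :=
  Fintype.ofInjective (fun c => (c.verts, c.perm)) <| by
    rintro ⟨⟩ ⟨⟩ h
    simp_all

end SimpleCycle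

namespace Hike

open SimpleCycle

variable {N : ℕ} {Adj : Fin N → Fin N → Prop}

def of (a : SimpleCycle N Adj) : Hike Adj := Hike.mk [a]

@[simp]
theorem mk_nil : Hike.mk ([] : List (SimpleCycle N Adj)) = 1 := rfl

theorem mk_append (l₁ l₂ : List (SimpleCycle N Adj)) :
    Hike.mk (l₁ ++ l₂) = Hike.mk l₁ * Hike.mk l₂ := by
  rw [Hike.mk, FreeMonoid.ofList_append, map_mul]
  rfl

theorem mk_cons (a : SimpleCycle N Adj) (l : List (SimpleCycle N Adj)) :
    Hike.mk (a :: l) = of a * Hike.mk l :=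
  mk_append [a] l

theorem mk_surjective : Function.Surjective (Hike.mk : List (SimpleCycle N Adj) → Hike Adj) := by
  intro x
  obtain ⟨w, rfl⟩ := Con.mk'_surjective (c := hikeCon Adj) x
  exact ⟨w.toList, rfl⟩

theorem mk_eq_mk_iff {l l' : List (SimpleCycle N Adj)} :
    Hike.mk l = Hike.mk l' ↔ hikeCon Adj (FreeMonoid.ofList l) (FreeMonoid.ofList l') :=
  Con.eq _

theorem of_mul_of_comm {a b : SimpleCycle N Adj} (h : VertexDisjoint a b) :
    of a * of b = of b * of a := by
  rw [of, of, ← mk_append, ← mk_append, mk_eq_mk_iff]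
  exact ConGen.Rel.of _ _ ⟨a, b, h, rfl, rfl⟩

theorem mk_eq_of_perm {l l' : List (SimpleCycle N Adj)} (hp : l.Perm l')
    (hl : l.Pairwise VertexDisjoint) : Hike.mk l = Hike.mk l' := by
  induction hp with
  | nil => rfl
  | cons a _ ih => rw [mk_cons, mk_cons, ih hl.of_cons]
  | swap a b l =>
    rw [mk_cons, mk_cons, mk_cons, mk_cons, ← mul_assoc, ← mul_assoc,
      of_mul_of_comm (List.rel_of_pairwise_cons hl List.mem_cons_self).symm]
  | trans h₁ _ ih₁ ih₂ => exact (ih₁ hl).trans (ih₂ ((h₁.pairwise_iff VertexDisjoint.symm).mp hl))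

noncomputable def lift {P : Type*} [Monoid P] (f : SimpleCycle N Adj → P)
    (hf : ∀ a b, VertexDisjoint a b → Commute (f a) (f b)) : Hike Adj →* P :=
  (hikeCon Adj).lift (FreeMonoid.lift f) <| Con.conGen_le.mpr <| by
    rintro _ _ ⟨a, b, hab, rfl, rfl⟩
    simpa [Con.ker_rel] using (hf a b hab).eq

theorem lift_mk {P : Type*} [Monoid P] (f : SimpleCycle N Adj → P)
    (hf : ∀ a b, VertexDisjoint a b → Commute (f a) (f b)) (l : List (SimpleCycle N Adj)) :
    lift f hf (Hike.mk l) = (l.map f).prod :=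
  (Con.lift_mk' _ _).trans (FreeMonoid.lift_ofList f l)

theorem lift_of {P : Type*} [Monoid P] (f : SimpleCycle N Adj → P)
    (hf : ∀ a b, VertexDisjoint a b → Commute (f a) (f b)) (a : SimpleCycle N Adj) :
    lift f hf (of a) = f a := by
  rw [of, lift_mk, List.map_singleton, List.prod_singleton]

noncomputable def cycles (x : Hike Adj) : Multiset (SimpleCycle N Adj) :=
  Multiplicative.toAdd (lift (fun a => Multiplicative.ofAdd {a}) (fun _ _ _ => Commute.all _ _) x)

@[simp]
theorem cycles_mk (l : List (SimpleCycle N Adj)) : cycles (Hike.mk l) = l := by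
  rw [cycles, lift_mk]
  induction l with
  | nil => rfl
  | cons a l ih => simp [ih]

@[simp]
theorem cycles_one : cycles (1 : Hike Adj) = 0 :=
  cycles_mk []

theorem cycles_mul (x y : Hike Adj) : cycles (x * y) = cycles x + cycles y := by
  rw [cycles, map_mul]
  rfl

theorem eq_one_of_cycles_eq_zero {x : Hike Adj} (h : cycles x = 0) : x = 1 := by
  obtain ⟨l, rfl⟩ := mk_surjective x
  simp_all

theorem finite_setOf_card_cycles_le (n : ℕ) :
    {x : Hike Adj | Multiset.card (cycles x) ≤ n}.Finite := by
  refine ((List.finite_length_le _ n).image Hike.mk).subset ?_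
  intro x hx
  obtain ⟨l, rfl⟩ := mk_surjective x
  exact ⟨l, by simpa using hx, rfl⟩

instance (h : Hike Adj) : Finite {p : Hike Adj × Hike Adj // p.1 * p.2 = h} := by
  have hS := finite_setOf_card_cycles_le (Adj := Adj) (Multiset.card (cycles h))
  refine ((hS.prod hS).subset ?_).to_subtype
  rintro ⟨x, y⟩ rfl
  simp [cycles_mul]

theorem mk_toList_eq_of_hikeCon {u v : FreeMonoid (SimpleCycle N Adj)} (h : hikeCon Adj u v) :
    Hike.mk u.toList = Hike.mk v.toList :=
  (Con.eq _).mpr h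

theorem cycles_eq_of_hikeCon {u v : FreeMonoid (SimpleCycle N Adj)} (h : hikeCon Adj u v) :
    (u.toList : Multiset (SimpleCycle N Adj)) = v.toList := by
  simpa using congrArg cycles (mk_toList_eq_of_hikeCon h)

theorem mk_erase_eq_of_hikeCon (a : SimpleCycle N Adj) {u v : FreeMonoid (SimpleCycle N Adj)}
    (h : hikeCon Adj u v) : Hike.mk (u.toList.erase a) = Hike.mk (v.toList.erase a) := by
  induction h with
  | of _ _ huv =>
    obtain ⟨b, c, hbc, rfl, rfl⟩ := huv
    change Hike.mk ([b, c].erase a) = Hike.mk ([c, b].erase a)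
    have hbc' : b ≠ c := VertexDisjoint.ne hbc
    by_cases hb : b = a
    · subst hb
      simp [hbc'.symm]
    by_cases hc : c = a
    · subst hc
      simp [hbc']
    simp only [List.erase_cons, beq_iff_eq, hb, hc, if_false, List.erase_nil]
    rw [mk_cons, mk_cons, mk_cons, mk_cons, mk_nil, mul_one, mul_one, of_mul_of_comm hbc]
  | refl => rfl
  | symm _ ih => exact ih.symm
  | trans _ _ ih₁ ih₂ => exact ih₁.trans ih₂
  | @mul w x y z h₁ h₂ ih₁ ih₂ =>
    have hmem : a ∈ w.toList ↔ a ∈ x.toList := by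
      rw [← Multiset.mem_coe, cycles_eq_of_hikeCon h₁, Multiset.mem_coe]
    simp only [FreeMonoid.toList_mul]
    by_cases ha : a ∈ w.toList
    · rw [List.erase_append_left _ ha, List.erase_append_left _ (hmem.mp ha), mk_append,
        mk_append, ih₁, mk_toList_eq_of_hikeCon h₂]
    · rw [List.erase_append_right _ ha, List.erase_append_right _ (mt hmem.mpr ha), mk_append,
        mk_append, ih₂, mk_toList_eq_of_hikeCon h₁]

noncomputable def eraseCycle (a : SimpleCycle N Adj) (x : Hike Adj) : Hike Adj :=
  Con.liftOn (c := hikeCon Adj) x (fun w => Hike.mk (w.toList.erase a))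
    (fun _ _ => mk_erase_eq_of_hikeCon a)

theorem eraseCycle_mk (a : SimpleCycle N Adj) (l : List (SimpleCycle N Adj)) :
    eraseCycle a (Hike.mk l) = Hike.mk (l.erase a) :=
  rfl

@[simp]
theorem eraseCycle_of_mul (a : SimpleCycle N Adj) (x : Hike Adj) :
    eraseCycle a (of a * x) = x := by
  obtain ⟨l, rfl⟩ := mk_surjective x
  rw [← mk_cons, eraseCycle_mk, List.erase_cons_head]

theorem eraseCycle_of_mul_of_ne {a b : SimpleCycle N Adj} (hne : b ≠ a) (x : Hike Adj) :
    eraseCycle a (of b * x) = of b * eraseCycle a x := by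
  obtain ⟨l, rfl⟩ := mk_surjective x
  rw [← mk_cons, eraseCycle_mk, eraseCycle_mk, List.erase_cons_tail (by simpa using hne), mk_cons]

instance : IsLeftCancelMul (Hike Adj) where
  mul_left_cancel x y z hyz := by
    obtain ⟨l, rfl⟩ := mk_surjective x
    induction l with
    | nil => simpa using hyz
    | cons a l ih =>
      simp only at hyz ih
      rw [mk_cons, mul_assoc, mul_assoc] at hyz
      exact ih (by simpa using congrArg (eraseCycle a) hyz)

noncomputable def proj (a b : SimpleCycle N Adj) (hab : ¬ VertexDisjoint a b) :
    Hike Adj →* FreeMonoid (SimpleCycle N Adj) :=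
  lift (fun c => if c = a ∨ c = b then FreeMonoid.of c else 1) <| by
    intro c d hcd
    by_cases hc : c = a ∨ c = b
    · by_cases hd : d = a ∨ d = b
      · exfalso
        rcases hc with rfl | rfl <;> rcases hd with rfl | rfl
        · exact hcd.ne rfl
        · exact hab hcd
        · exact hab hcd.symm
        · exact hcd.ne rfl
      · simp [hd]
    · simp [hc]

theorem vertexDisjoint_and_dvd_of_of_dvd_of_mul {a b : SimpleCycle N Adj} (hne : b ≠ a)
    {x : Hike Adj} (h : of b ∣ of a * x) : VertexDisjoint a b ∧ of b ∣ x := by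
  obtain ⟨y, hy⟩ := h
  have hx : x = of b * eraseCycle a y := by
    rw [← eraseCycle_of_mul_of_ne hne, ← hy, eraseCycle_of_mul]
  refine ⟨?_, eraseCycle a y, hx⟩
  by_contra hab
  -- the projection to `{a, b}` starts with `a` on one side and with `b` on the other
  have := congrArg (fun z => (proj a b hab z).toList) hy
  simp [hx, proj, lift_of, hne.symm] at this

def IsSelfAvoiding (x : Hike Adj) : Prop :=
  ∃ l : List (SimpleCycle N Adj), x = Hike.mk l ∧ l.Pairwise VertexDisjoint

theorem of_dvd_mk_of_mem {l : List (SimpleCycle N Adj)} (hl : l.Pairwise VertexDisjoint)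
    {a : SimpleCycle N Adj} (ha : a ∈ l) : of a ∣ Hike.mk l :=
  ⟨Hike.mk (l.erase a), by rw [← mk_cons]; exact mk_eq_of_perm (List.perm_cons_erase ha) hl⟩

noncomputable def initialCycles (x : Hike Adj) : Finset (SimpleCycle N Adj) :=
  Finset.univ.filter fun a => of a ∣ x

theorem mem_initialCycles {x : Hike Adj} {a : SimpleCycle N Adj} :
    a ∈ initialCycles x ↔ of a ∣ x := by
  simp [initialCycles]

theorem initialCycles_eq_empty_iff {x : Hike Adj} : initialCycles x = ∅ ↔ x = 1 := by
  obtain ⟨l, rfl⟩ := mk_surjective x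
  constructor
  · intro h
    cases l with
    | nil => rfl
    | cons a l =>
      have : a ∈ initialCycles (Hike.mk (a :: l)) := mem_initialCycles.mpr ⟨Hike.mk l, mk_cons a l⟩
      simp [h] at this
  · intro h
    refine Finset.eq_empty_of_forall_notMem fun a ha => ?_
    obtain ⟨y, hy⟩ := mem_initialCycles.mp ha
    simpa [h, of, cycles_mul] using congrArg cycles hy

theorem IsSelfAvoiding.nodup_cycles {x : Hike Adj} (hx : IsSelfAvoiding x) : (cycles x).Nodup := by
  obtain ⟨l, rfl, hl⟩ := hx
  simpa using nodup_of_pairwise_vertexDisjoint hl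

theorem IsSelfAvoiding.eq_of_toFinset_cycles_eq {x y : Hike Adj} (hx : IsSelfAvoiding x)
    (hy : IsSelfAvoiding y) (h : (cycles x).toFinset = (cycles y).toFinset) : x = y := by
  obtain ⟨l, rfl, hl⟩ := hx
  obtain ⟨l', rfl, hl'⟩ := hy
  simp only [cycles_mk, List.toFinset_coe] at h
  exact mk_eq_of_perm (List.perm_of_nodup_nodup_toFinset_eq
    (nodup_of_pairwise_vertexDisjoint hl) (nodup_of_pairwise_vertexDisjoint hl') h) hl

theorem IsSelfAvoiding.toFinset_cycles_subset {x y : Hike Adj} (hx : IsSelfAvoiding x)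
    (hxy : x ∣ y) : (cycles x).toFinset ⊆ initialCycles y := by
  obtain ⟨l, rfl, hl⟩ := hx
  intro a ha
  rw [cycles_mk, Multiset.mem_toFinset, Multiset.mem_coe] at ha
  exact mem_initialCycles.mpr ((of_dvd_mk_of_mem hl ha).trans hxy)

theorem exists_isSelfAvoiding_of_subset_initialCycles {S : Finset (SimpleCycle N Adj)}
    {y : Hike Adj} (hS : S ⊆ initialCycles y) :
    ∃ x : Hike Adj, IsSelfAvoiding x ∧ (cycles x).toFinset = S ∧ x ∣ y := by
  induction S using Finset.induction_on generalizing y with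
  | empty => exact ⟨1, ⟨[], rfl, List.Pairwise.nil⟩, by simp, one_dvd y⟩
  | insert a S haS ih =>
    obtain ⟨z, rfl⟩ := mem_initialCycles.mp (hS (Finset.mem_insert_self a S))
    have hS' (b) (hb : b ∈ S) : VertexDisjoint a b ∧ of b ∣ z :=
      vertexDisjoint_and_dvd_of_of_dvd_of_mul (ne_of_mem_of_not_mem hb haS)
        (mem_initialCycles.mp (hS (Finset.mem_insert_of_mem hb)))
    obtain ⟨_, ⟨l, rfl, hl⟩, hlS, hlz⟩ := ih fun b hb => mem_initialCycles.mpr (hS' b hb).2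
    rw [cycles_mk, List.toFinset_coe] at hlS
    subst hlS
    refine ⟨Hike.mk (a :: l), ⟨a :: l, rfl,
      List.pairwise_cons.mpr ⟨fun b hb => (hS' b (List.mem_toFinset.mpr hb)).1, hl⟩⟩, by simp, ?_⟩
    rw [mk_cons]
    exact mul_dvd_mul_left _ hlz

noncomputable def moebius (R : Type*) [Ring R] (x : Hike Adj) : R :=
  if IsSelfAvoiding x then (-1) ^ Multiset.card (cycles x) else 0

theorem moebius_mk_of_pairwise (R : Type*) [Ring R] {l : List (SimpleCycle N Adj)}
    (hl : l.Pairwise VertexDisjoint) : moebius R (Hike.mk l) = (-1) ^ l.length := by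
  rw [moebius, if_pos ⟨l, rfl, hl⟩, cycles_mk, Multiset.coe_card]

theorem IsSelfAvoiding.moebius_eq (R : Type*) [Ring R] {x : Hike Adj} (hx : IsSelfAvoiding x) :
    moebius R x = (-1) ^ (cycles x).toFinset.card := by
  rw [moebius, if_pos hx, Multiset.toFinset_card_of_nodup hx.nodup_cycles]

theorem moebius_of_not_isSelfAvoiding (R : Type*) [Ring R] {x : Hike Adj}
    (hx : ¬ IsSelfAvoiding x) : moebius R x = 0 :=
  if_neg hx

theorem isSelfAvoiding_of_moebius_ne_zero {R : Type*} [Ring R] {x : Hike Adj}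
    (hx : moebius R x ≠ 0) : IsSelfAvoiding x :=
  not_imp_comm.mp (moebius_of_not_isSelfAvoiding R) hx

theorem sum_factorizations_moebius_eq_sum_powerset (R : Type*) [Ring R] (h : Hike Adj)
    [Fintype {p : Hike Adj × Hike Adj // p.1 * p.2 = h}] :
    ∑ p : {p : Hike Adj × Hike Adj // p.1 * p.2 = h}, moebius R p.1.1 =
      ∑ S ∈ (initialCycles h).powerset, (-1 : R) ^ S.card := by
  refine Finset.sum_bij_ne_zero (fun p _ _ => (cycles p.1.1).toFinset) ?_ ?_ ?_ ?_
  · rintro ⟨⟨d, e⟩, hde⟩ - hd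
    exact Finset.mem_powerset.mpr
      ((isSelfAvoiding_of_moebius_ne_zero hd).toFinset_cycles_subset ⟨e, hde.symm⟩)
  · rintro ⟨⟨d, e⟩, hde⟩ - hd ⟨⟨d', e'⟩, hde'⟩ - hd' hS
    have hdd' : d = d' := (isSelfAvoiding_of_moebius_ne_zero hd).eq_of_toFinset_cycles_eq
      (isSelfAvoiding_of_moebius_ne_zero hd') hS
    subst hdd'
    obtain rfl : e = e' := mul_left_cancel (hde.trans hde'.symm)
    rfl
  · intro S hS hS₀
    obtain ⟨d, hd, rfl, e, he⟩ :=
      exists_isSelfAvoiding_of_subset_initialCycles (Finset.mem_powerset.mp hS)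
    exact ⟨⟨(d, e), he.symm⟩, Finset.mem_univ _, by rwa [hd.moebius_eq R], rfl⟩
  · rintro ⟨⟨d, e⟩, hde⟩ - hd
    exact (isSelfAvoiding_of_moebius_ne_zero hd).moebius_eq R

theorem finsum_factorizations_moebius (R : Type*) [Ring R] (h : Hike Adj) :
    ∑ᶠ p : {p : Hike Adj × Hike Adj // p.1 * p.2 = h}, moebius R p.1.1 =
      if h = 1 then 1 else 0 := by
  have := Fintype.ofFinite {p : Hike Adj × Hike Adj // p.1 * p.2 = h}
  rw [finsum_eq_sum_of_fintype, sum_factorizations_moebius_eq_sum_powerset, ←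
    initialCycles_eq_empty_iff]
  exact mod_cast congrArg (Int.cast : ℤ → R) Finset.sum_powerset_neg_one_pow_card

end Hike

/-- the Möbius function of the trace monoid of hikes.  If `μ : Hike → ℂ` is the
convolution inverse of the constant function `1`, i.e. for every hike `h` the (finite) sum of
`μ(d)` over all factorizations `h = d·e` equals `[h = 1]`, then `μ` is supported on
self-avoiding hikes (words of pairwise vertex-disjoint simple cycles), where it takes the value
`(-1)^{Ω(h)}` with `Ω(h)` the number of prime factors. -/
theorem moebius_function_of_hikes {N : ℕ} (Adj : Fin N → Fin N → Prop)
    (μ : Hike Adj → ℂ)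
    (hμ : ∀ h : Hike Adj,
      (∑ᶠ p : {p : Hike Adj × Hike Adj // p.1 * p.2 = h}, μ (p : Hike Adj × Hike Adj).1) =
        if h = 1 then 1 else 0) :
    (∀ l : List (SimpleCycle N Adj),
        l.Pairwise (fun a b => Disjoint a.verts b.verts) →
        μ (Hike.mk l) = (-1 : ℂ) ^ l.length) ∧
    (∀ h : Hike Adj,
        (¬ ∃ l : List (SimpleCycle N Adj),
            h = Hike.mk l ∧ l.Pairwise (fun a b => Disjoint a.verts b.verts)) →
        μ h = 0) := by
  have hμ_eq : μ = Hike.moebius ℂ :=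
    eq_of_finsum_factorizations_eq (fun x => Multiset.card (Hike.cycles x))
      (fun x y => by rw [Hike.cycles_mul, Multiset.card_add])
      (fun x hx => Hike.eq_one_of_cycles_eq_zero (Multiset.card_eq_zero.mp hx))
      (fun h => by rw [hμ, Hike.finsum_factorizations_moebius])
  subst hμ_eq
  exact ⟨fun l hl => Hike.moebius_mk_of_pairwise ℂ hl,
    fun h hh => Hike.moebius_of_not_isSelfAvoiding ℂ hh⟩
end

section
/- (Semi-commutative Eratosthenes–Legendre sieve) Let H be the trace monoid of hikes on a finite digraph G, let P be a set of simple cycles (primes) of G, and let H_ℓ be the finite set of hikes of length ℓ. Then the number S(H_ℓ, P) of hikes in H_ℓ not right-divisible by any prime in P equals Σ_{d ∈ P^{s.a.}} μ(d) |M_d|, where P^{s.a.} is the set of self-avoiding hikes all of whose prime factors lie in P (including the empty hike), μ(d) = (-1)^{Ω(d)}, and M_d is the set of hikes in H_ℓ that are left-multiples of d. -/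
/- ===== auxiliary development ===== -/
namespace SieveAux

noncomputable instance {N : ℕ} {Adj : Fin N → Fin N → Prop} : DecidableEq (SimpleCycle N Adj) :=
  Classical.decEq _

instance scFinite {N : ℕ} {Adj : Fin N → Fin N → Prop} : Finite (SimpleCycle N Adj) := by
  apply Finite.of_injective (fun c => (c.verts, c.perm))
  rintro ⟨⟩ ⟨⟩ h
  simp_all

variable {N : ℕ} {Adj : Fin N → Fin N → Prop}

def dis (a b : SimpleCycle N Adj) : Prop := Disjoint a.verts b.verts

lemma dis_symm {a b : SimpleCycle N Adj} (h : dis a b) : dis b a := Disjoint.symm h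

lemma dis_irrefl (a : SimpleCycle N Adj) : ¬ dis a a := by
  intro h
  rcases a.nonempty with ⟨x, hx⟩
  have : a.verts = ⊥ := disjoint_self.mp h
  simp [this] at hx

lemma dis_ne {a b : SimpleCycle N Adj} (h : dis a b) : a ≠ b := by
  rintro rfl; exact dis_irrefl a h

def E (w v : List (SimpleCycle N Adj)) : Prop :=
  hikeCon Adj (FreeMonoid.ofList w) (FreeMonoid.ofList v)

lemma E.refl (w : List (SimpleCycle N Adj)) : E (Adj := Adj) w w := (hikeCon Adj).refl _
lemma E.symm {w v : List (SimpleCycle N Adj)} (h : E w v) : E v w := (hikeCon Adj).symm h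
lemma E.trans {w v u : List (SimpleCycle N Adj)} (h : E w v) (h' : E v u) : E w u :=
  (hikeCon Adj).trans h h'

lemma E.append {w w' v v' : List (SimpleCycle N Adj)} (h : E w w') (h' : E v v') :
    E (w ++ v) (w' ++ v') := by
  have := (hikeCon Adj).mul h h'
  unfold E; rw [FreeMonoid.ofList_append, FreeMonoid.ofList_append]; exact this

lemma E.swap {a b : SimpleCycle N Adj} (hab : dis a b) (p q : List (SimpleCycle N Adj)) :
    E (p ++ a :: b :: q) (p ++ b :: a :: q) := by
  have base : E (Adj := Adj) [a, b] [b, a] :=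
    ConGen.Rel.of _ _ ⟨a, b, hab, rfl, rfl⟩
  have : E (p ++ ([a, b] ++ q)) (p ++ ([b, a] ++ q)) :=
    (E.refl p).append (base.append (E.refl q))
  simpa using this

lemma hike_mk_eq {w v : List (SimpleCycle N Adj)} : Hike.mk (Adj := Adj) w = Hike.mk v ↔ E w v := by
  simp only [Hike.mk, Con.coe_mk']
  exact (hikeCon Adj).eq

end SieveAux

namespace SieveAux
variable {N : ℕ} {Adj : Fin N → Fin N → Prop}

lemma E.cons (a : SimpleCycle N Adj) {w v : List (SimpleCycle N Adj)} (h : E w v) :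
    E (a :: w) (a :: v) := by
  simpa using (E.refl [a]).append h

lemma bubble_left {a : SimpleCycle N Adj} :
    ∀ {t r : List (SimpleCycle N Adj)}, (∀ c ∈ t, dis a c) → E (t ++ a :: r) (a :: (t ++ r))
  | [], r, _ => E.refl _
  | c :: t, r, h => by
    have h1 : E (t ++ a :: r) (a :: (t ++ r)) := bubble_left (fun x hx => h x (List.mem_cons_of_mem _ hx))
    have h2 : E (c :: (t ++ a :: r)) (c :: a :: (t ++ r)) := E.cons c h1
    have h3 : E (c :: a :: (t ++ r)) (a :: c :: (t ++ r)) := by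
      simpa using E.swap (dis_symm (h c (by simp))) [] (t ++ r)
    simpa using h2.trans h3

lemma bubble_right {a : SimpleCycle N Adj} :
    ∀ {t : List (SimpleCycle N Adj)} (p : List (SimpleCycle N Adj)),
      (∀ c ∈ t, dis a c) → E (p ++ a :: t) (p ++ (t ++ [a]))
  | [], p, _ => E.refl _
  | c :: t, p, h => by
    have h1 : E (p ++ a :: c :: t) (p ++ c :: a :: t) := E.swap (h c (by simp)) p t
    have h2 : E ((p ++ [c]) ++ a :: t) ((p ++ [c]) ++ (t ++ [a])) :=
      bubble_right (p ++ [c]) (fun x hx => h x (List.mem_cons_of_mem _ hx))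
    simpa using h1.trans (by simpa using h2)

noncomputable def proj (a b : SimpleCycle N Adj) (w : List (SimpleCycle N Adj)) :
    List (SimpleCycle N Adj) :=
  w.filter (fun c => decide (c = a ∨ c = b))

lemma proj_append (a b : SimpleCycle N Adj) (w v : List (SimpleCycle N Adj)) :
    proj a b (w ++ v) = proj a b w ++ proj a b v :=
  List.filter_append _ _

lemma mem_pred_of_mem_proj {a b c : SimpleCycle N Adj} {w : List (SimpleCycle N Adj)}
    (h : c ∈ proj a b w) : c ∈ w ∧ (c = a ∨ c = b) := by
  have := List.mem_filter.1 h
  exact ⟨this.1, by simpa using this.2⟩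

lemma mem_proj_self {a b : SimpleCycle N Adj} {c : SimpleCycle N Adj}
    {w : List (SimpleCycle N Adj)} (hc : c ∈ w) (hp : c = a ∨ c = b) : c ∈ proj a b w :=
  List.mem_filter.2 ⟨hc, by simpa using hp⟩

/-- key invariance: projections onto non-disjoint pairs are invariants of the congruence. -/
lemma proj_invariant {a b : SimpleCycle N Adj} (hab : ¬ dis a b)
    {x y : FreeMonoid (SimpleCycle N Adj)} (h : hikeCon Adj x y) :
    proj a b x.toList = proj a b y.toList := by
  induction h with
  | of u v huv =>
      obtain ⟨a', b', hd, rfl, rfl⟩ := huv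
      show proj a b [a', b'] = proj a b [b', a']
      by_cases pa : a' = a ∨ a' = b <;> by_cases pb : b' = a ∨ b' = b
      · exfalso
        have hne : a' ≠ b' := dis_ne hd
        rcases pa with rfl | rfl <;> rcases pb with rfl | rfl
        · exact hne rfl
        · exact hab hd
        · exact hab (dis_symm hd)
        · exact hne rfl
      all_goals simp [proj, List.filter, pa, pb]
  | refl _ => rfl
  | symm _ ih => exact ih.symm
  | trans _ _ ih1 ih2 => exact ih1.trans ih2
  | mul _ _ ih1 ih2 =>
      rename_i w₁ w₂ v₁ v₂ _ _
      show proj a b (w₁.toList ++ v₁.toList) = proj a b (w₂.toList ++ v₂.toList)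
      rw [proj_append, proj_append, ih1, ih2]

lemma proj_inv_E {a b : SimpleCycle N Adj} (hab : ¬ dis a b)
    {w v : List (SimpleCycle N Adj)} (h : E w v) : proj a b w = proj a b v :=
  proj_invariant hab h

/-- length invariance -/
lemma len_invariant {x y : FreeMonoid (SimpleCycle N Adj)} (h : hikeCon Adj x y) :
    (x.toList.map SimpleCycle.length).sum = (y.toList.map SimpleCycle.length).sum := by
  induction h with
  | of u v huv =>
      obtain ⟨a', b', _, rfl, rfl⟩ := huv
      show (([a', b']).map SimpleCycle.length).sum = (([b', a']).map SimpleCycle.length).sum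
      simp [Nat.add_comm]
  | refl _ => rfl
  | symm _ ih => exact ih.symm
  | trans _ _ ih1 ih2 => exact ih1.trans ih2
  | mul _ _ ih1 ih2 =>
      rename_i w₁ w₂ v₁ v₂ _ _
      show ((w₁.toList ++ v₁.toList).map SimpleCycle.length).sum
          = ((w₂.toList ++ v₂.toList).map SimpleCycle.length).sum
      simp only [List.map_append, List.sum_append, ih1, ih2]

end SieveAux

namespace SieveAux
variable {N : ℕ} {Adj : Fin N → Fin N → Prop}

lemma proj_nil (a b : SimpleCycle N Adj) : proj a b [] = [] := rfl

lemma proj_cons_pos {a b c : SimpleCycle N Adj} (w : List (SimpleCycle N Adj))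
    (hp : c = a ∨ c = b) : proj a b (c :: w) = c :: proj a b w := by
  simp [proj, List.filter_cons, hp]

lemma proj_cons_neg {a b c : SimpleCycle N Adj} (w : List (SimpleCycle N Adj))
    (hp : ¬ (c = a ∨ c = b)) : proj a b (c :: w) = proj a b w := by
  simp [proj, List.filter_cons, hp]

lemma first_split {a : SimpleCycle N Adj} :
    ∀ {v : List (SimpleCycle N Adj)}, a ∈ v → ∃ v₁ v₂, v = v₁ ++ a :: v₂ ∧ a ∉ v₁
  | c :: v', h => by
    by_cases hca : c = a
    · exact ⟨[], v', by rw [hca]; rfl, by simp⟩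
    · have : a ∈ v' := by
        rcases List.mem_cons.1 h with h1 | h1
        · exact absurd h1.symm hca
        · exact h1
      obtain ⟨v₁, v₂, rfl, hn⟩ := first_split this
      refine ⟨c :: v₁, v₂, rfl, ?_⟩
      simp only [List.mem_cons, not_or]
      exact ⟨fun h => hca h.symm, hn⟩

lemma last_split {a : SimpleCycle N Adj} {v : List (SimpleCycle N Adj)} (h : a ∈ v) :
    ∃ v₁ v₂, v = v₁ ++ a :: v₂ ∧ a ∉ v₂ := by
  have h' : a ∈ v.reverse := by simpa using h
  obtain ⟨t₁, t₂, ht, hn⟩ := first_split h'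
  refine ⟨t₂.reverse, t₁.reverse, ?_, by simpa using hn⟩
  have := congrArg List.reverse ht
  simpa using this

/-- Converse of the projection lemma (Cori–Perrin style). -/
lemma proj_converse : ∀ (w v : List (SimpleCycle N Adj)),
    (∀ a b, ¬ dis a b → proj a b w = proj a b v) → E w v
  | [], v, H => by
    cases v with
    | nil => exact E.refl []
    | cons c v' =>
      exfalso
      have h := (H c c (dis_irrefl c)).symm
      rw [proj_cons_pos _ (Or.inl rfl), proj_nil] at h
      exact List.cons_ne_nil _ _ h
  | a :: w', v, H => by
    have hav : a ∈ v := by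
      have h := H a a (dis_irrefl a)
      have hm : a ∈ proj a a (a :: w') := mem_proj_self (by simp) (Or.inl rfl)
      rw [h] at hm
      exact (mem_pred_of_mem_proj hm).1
    obtain ⟨v₁, v₂, rfl, hnv₁⟩ := first_split hav
    have hdis : ∀ c ∈ v₁, dis a c := by
      intro c hc
      by_contra hnd
      have hpe := H a c hnd
      have hne : proj a c v₁ ≠ [] := by
        intro h0
        have : c ∈ proj a c v₁ := mem_proj_self hc (Or.inr rfl)
        simp [h0] at this
      cases hdt : proj a c v₁ with
      | nil => exact hne hdt
      | cons d t =>
        have heq : a :: proj a c w' = d :: (t ++ proj a c (a :: v₂)) := by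
          rw [← proj_cons_pos w' (Or.inl rfl), hpe, proj_append, hdt]; simp
        have had : a = d := by injection heq
        have : d ∈ v₁ := (mem_pred_of_mem_proj (hdt ▸ (show d ∈ d :: t from List.mem_cons_self))).1
        exact hnv₁ (had ▸ this)
    have HH : ∀ a' b', ¬ dis a' b' → proj a' b' w' = proj a' b' (v₁ ++ v₂) := by
      intro a' b' hnd
      have h := H a' b' hnd
      by_cases pa : a = a' ∨ a = b'
      · have hv₁ : proj a' b' v₁ = [] := by
          by_contra h0
          cases hdt : proj a' b' v₁ with
          | nil => exact h0 hdt
          | cons c t =>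
            have hcm := mem_pred_of_mem_proj (hdt ▸ (show c ∈ c :: t from List.mem_cons_self))
            have hdisac : dis a c := hdis c hcm.1
            have hca : c ≠ a := fun h => (dis_ne hdisac) h.symm
            rcases pa with rfl | rfl <;> rcases hcm.2 with rfl | rfl
            · exact hca rfl
            · exact hnd hdisac
            · exact hnd (dis_symm hdisac)
            · exact hca rfl
        rw [proj_cons_pos w' pa, proj_append, hv₁, proj_cons_pos v₂ pa] at h
        have : proj a' b' w' = proj a' b' v₂ := by
          simpa using h
        rw [proj_append, hv₁, this]; simp
      · rw [proj_cons_neg w' pa, proj_append, proj_cons_neg v₂ pa, ← proj_append] at h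
        exact h
    have hIH : E w' (v₁ ++ v₂) := proj_converse w' (v₁ ++ v₂) HH
    exact (E.cons a hIH).trans (bubble_left hdis).symm

lemma cancel_right {a : SimpleCycle N Adj} {w v : List (SimpleCycle N Adj)}
    (h : E (w ++ [a]) (v ++ [a])) : E w v := by
  apply proj_converse
  intro a' b' hnd
  have hp := proj_inv_E hnd h
  rw [proj_append, proj_append] at hp
  exact List.append_cancel_right hp

lemma word_lemma_A {a b : SimpleCycle N Adj} {w v : List (SimpleCycle N Adj)} (hne : a ≠ b)
    (h : E (w ++ [a]) (v ++ [b])) :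
    dis a b ∧ ∃ u, E w (u ++ [b]) ∧ E v (u ++ [a]) := by
  have hdab : dis a b := by
    by_contra hnd
    have hp := proj_inv_E hnd h
    rw [proj_append, proj_append, proj_cons_pos [] (Or.inl rfl),
      proj_cons_pos [] (Or.inr rfl), proj_nil] at hp
    have := congrArg List.getLast? hp
    rw [List.getLast?_concat, List.getLast?_concat] at this
    exact hne (by injection this)
  have hav : a ∈ v := by
    have hp := proj_inv_E (dis_irrefl a) h
    rw [proj_append, proj_append, proj_cons_pos [] (Or.inl rfl),
      proj_cons_neg [] (by simpa using fun h => hne h.symm), proj_nil] at hp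
    have hm : a ∈ proj a a v ++ [] := by rw [← hp]; simp
    simp at hm
    exact (mem_pred_of_mem_proj hm).1
  obtain ⟨v₁, v₂, rfl, hnv₂⟩ := last_split hav
  have hdisv₂ : ∀ c ∈ v₂ ++ [b], dis a c := by
    intro c hc
    by_contra hnd
    have hca : c ≠ a := by
      rintro rfl
      rcases List.mem_append.1 hc with h1 | h1
      · exact hnv₂ h1
      · simp at h1; exact hne h1
    have hp := proj_inv_E hnd h
    have hre : (v₁ ++ a :: v₂) ++ [b] = v₁ ++ a :: (v₂ ++ [b]) := by simp
    rw [proj_append, proj_cons_pos [] (Or.inl rfl), proj_nil, hre, proj_append,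
      proj_cons_pos _ (Or.inl rfl)] at hp
    have hXne : proj a c (v₂ ++ [b]) ≠ [] := by
      intro h0
      have : c ∈ proj a c (v₂ ++ [b]) := mem_proj_self hc (Or.inr rfl)
      simp [h0] at this
    rcases (proj a c (v₂ ++ [b])).eq_nil_or_concat with hX | ⟨X', x, hX⟩
    · exact hXne hX
    · rw [List.concat_eq_append] at hX
      have h1 : (proj a c w ++ [a]).getLast? = some a := List.getLast?_concat
      rw [hp, hX] at h1
      have h2 : (proj a c v₁ ++ a :: (X' ++ [x])).getLast? = some x := by
        rw [show proj a c v₁ ++ a :: (X' ++ [x]) = (proj a c v₁ ++ a :: X') ++ [x] by simp,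
          List.getLast?_concat]
      rw [h2] at h1
      have hxa : x = a := by injection h1
      have hxm : x ∈ proj a c (v₂ ++ [b]) := by rw [hX]; simp
      have := (mem_pred_of_mem_proj hxm).1
      rw [hxa] at this
      rcases List.mem_append.1 this with h3 | h3
      · exact hnv₂ h3
      · simp at h3; exact hne h3
  -- now build u
  have hu1 : E (v₁ ++ a :: v₂) ((v₁ ++ v₂) ++ [a]) := by
    have := bubble_right (a := a) v₁ (fun c hc => hdisv₂ c (List.mem_append_left _ hc))
    simpa using this
  have hu2 : E ((v₁ ++ a :: v₂) ++ [b]) (((v₁ ++ v₂) ++ [b]) ++ [a]) := by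
    have := bubble_right (a := a) v₁ (t := v₂ ++ [b]) hdisv₂
    have h3 : E (v₁ ++ a :: (v₂ ++ [b])) (v₁ ++ ((v₂ ++ [b]) ++ [a])) := this
    refine E.trans (by simpa using (show E ((v₁ ++ a :: v₂) ++ [b]) (v₁ ++ a :: (v₂ ++ [b])) from by
      simp only [List.append_assoc, List.cons_append]; exact E.refl _)) ?_
    refine h3.trans ?_
    simp only [List.append_assoc, List.cons_append]
    exact E.refl _
  refine ⟨hdab, v₁ ++ v₂, ?_, hu1⟩
  exact cancel_right (h.trans hu2)

end SieveAux

namespace SieveAux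
variable {N : ℕ} {Adj : Fin N → Fin N → Prop}

lemma exists_word (h : Hike Adj) : ∃ l, h = Hike.mk l := by
  obtain ⟨x, hx⟩ := Con.mk'_surjective (c := hikeCon Adj) h
  exact ⟨x.toList, hx.symm⟩

lemma mk_append (w v : List (SimpleCycle N Adj)) :
    Hike.mk (Adj := Adj) (w ++ v) = Hike.mk w * Hike.mk v := by
  unfold Hike.mk
  rw [FreeMonoid.ofList_append, map_mul]
  rfl

lemma mk_nil : Hike.mk (Adj := Adj) [] = 1 := by
  unfold Hike.mk
  exact map_one _

lemma hike_lemma_A {a b : SimpleCycle N Adj} (hne : a ≠ b) {g₁ g₂ : Hike Adj}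
    (h : g₁ * Hike.mk [a] = g₂ * Hike.mk [b]) :
    dis a b ∧ ∃ u : Hike Adj, g₁ = u * Hike.mk [b] ∧ g₂ = u * Hike.mk [a] := by
  obtain ⟨w, rfl⟩ := exists_word g₁
  obtain ⟨v, rfl⟩ := exists_word g₂
  rw [← mk_append, ← mk_append, hike_mk_eq] at h
  obtain ⟨hd, u, h1, h2⟩ := word_lemma_A hne h
  exact ⟨hd, Hike.mk u, by rw [← mk_append]; exact hike_mk_eq.2 h1,
    by rw [← mk_append]; exact hike_mk_eq.2 h2⟩

lemma perm_E {l l' : List (SimpleCycle N Adj)} (hp : l.Perm l') (hpw : l.Pairwise dis) :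
    E l l' := by
  induction hp with
  | nil => exact E.refl []
  | cons x _ ih => exact E.cons x (ih (List.pairwise_cons.1 hpw).2)
  | swap x y l =>
      have hd : dis y x := (List.pairwise_cons.1 hpw).1 x (by simp)
      exact E.swap hd [] l
  | trans h1 _ ih1 ih2 =>
      exact (ih1 hpw).trans (ih2 ((h1.pairwise_iff (fun hd => dis_symm hd)).1 hpw))

lemma divisor_extend {a : SimpleCycle N Adj} {l : List (SimpleCycle N Adj)}
    {h : Hike Adj} (hpw : l.Pairwise dis) (hal : a ∉ l)
    (h2 : ∃ h₂, h = h₂ * Hike.mk l) (h1 : ∃ h₁, h = h₁ * Hike.mk [a]) :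
    (∀ c ∈ l, dis a c) ∧ ∃ h₃, h = h₃ * Hike.mk (l ++ [a]) := by
  induction l using List.reverseRecOn generalizing h with
  | nil => exact ⟨by simp, by simpa using h1⟩
  | append_singleton l' b ih =>
      obtain ⟨h₂, rfl⟩ := h2
      obtain ⟨h₁, heq⟩ := h1
      have hab : a ≠ b := by rintro rfl; exact hal (by simp)
      have hg : h₁ * Hike.mk [a] = (h₂ * Hike.mk l') * Hike.mk [b] := by
        rw [← heq, mk_append, mul_assoc]
      obtain ⟨hdab, u, _, hu2⟩ := hike_lemma_A hab hg
      have hpw' : l'.Pairwise dis := (List.pairwise_append.1 hpw).1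
      have hal' : a ∉ l' := fun hx => hal (by simp [hx])
      obtain ⟨hdisl', g₃, hg₃⟩ := ih hpw' hal' ⟨h₂, rfl⟩ ⟨u, hu2⟩
      refine ⟨?_, ?_⟩
      · intro c hc
        rcases List.mem_append.1 hc with h3 | h3
        · exact hdisl' c h3
        · simp at h3; subst h3; exact hdab
      · refine ⟨g₃, ?_⟩
        have hE : E (l' ++ [a] ++ [b] : List (SimpleCycle N Adj)) ((l' ++ [b]) ++ [a]) := by
          have := E.swap (Adj := Adj) hdab l' []
          simpa using this
        calc h₂ * Hike.mk (l' ++ [b]) = (h₂ * Hike.mk l') * Hike.mk [b] := by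
              rw [mk_append, mul_assoc]
          _ = g₃ * Hike.mk (l' ++ [a]) * Hike.mk [b] := by rw [← hg₃]
          _ = g₃ * Hike.mk (l' ++ [a] ++ [b]) := by rw [mk_append (l' ++ [a]) [b], mul_assoc]
          _ = g₃ * Hike.mk ((l' ++ [b]) ++ [a]) := by rw [hike_mk_eq.2 hE]

lemma toList_pairwise {s : Finset (SimpleCycle N Adj)}
    (hpw : (↑s : Set (SimpleCycle N Adj)).Pairwise dis) : s.toList.Pairwise dis := by
  refine List.Pairwise.imp_of_mem ?_ s.nodup_toList
  intro a b ha hb hne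
  exact hpw (by simpa using ha) (by simpa using hb) hne

lemma finset_divides {h : Hike Adj} (s : Finset (SimpleCycle N Adj))
    (hdiv : ∀ γ ∈ s, ∃ h', h = h' * Hike.mk [γ]) :
    (↑s : Set (SimpleCycle N Adj)).Pairwise dis ∧ ∃ h', h = h' * Hike.mk s.toList := by
  induction s using Finset.induction with
  | empty => exact ⟨by simp, ⟨h, by simp [mk_nil]⟩⟩
  | @insert a s ha ih =>
      obtain ⟨hpw, h₂, hh₂⟩ := ih (fun γ hγ => hdiv γ (Finset.mem_insert_of_mem hγ))
      have hpl : s.toList.Pairwise dis := toList_pairwise hpw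
      have hanl : a ∉ s.toList := by simpa using ha
      obtain ⟨hdisa, h₃, hh₃⟩ :=
        divisor_extend hpl hanl ⟨h₂, hh₂⟩ (hdiv a (Finset.mem_insert_self a s))
      constructor
      · intro x hx y hy hne
        simp only [Finset.coe_insert, Set.mem_insert_iff] at hx hy
        rcases hx with rfl | hx <;> rcases hy with rfl | hy
        · exact absurd rfl hne
        · exact hdisa y (by simpa using hy)
        · exact dis_symm (hdisa x (by simpa using hx))
        · exact hpw hx hy hne
      · refine ⟨h₃, ?_⟩
        rw [hh₃]
        congr 1
        apply hike_mk_eq.2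
        have hperm : (s.toList ++ [a]).Perm (insert a s).toList := by
          refine List.Perm.trans (List.perm_append_singleton a s.toList) ?_
          exact (Finset.toList_insert ha).symm
        apply perm_E hperm
        rw [List.pairwise_append]
        refine ⟨hpl, by simp, ?_⟩
        intro x hx y hy
        simp at hy; subst hy
        exact dis_symm (hdisa x hx)

lemma divides_of_mem {h : Hike Adj} {s : Finset (SimpleCycle N Adj)}
    (hpw : (↑s : Set (SimpleCycle N Adj)).Pairwise dis)
    {γ : SimpleCycle N Adj} (hγ : γ ∈ s) (hd : ∃ h', h = h' * Hike.mk s.toList) :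
    ∃ h', h = h' * Hike.mk [γ] := by
  obtain ⟨h', rfl⟩ := hd
  have hγe : γ ∉ s.erase γ := Finset.notMem_erase γ s
  have hperm : s.toList.Perm ((s.erase γ).toList ++ [γ]) := by
    refine List.Perm.trans ?_ (List.perm_append_singleton γ _).symm
    have h1 : s.toList = (insert γ (s.erase γ)).toList := by rw [Finset.insert_erase hγ]
    rw [h1]
    exact Finset.toList_insert hγe
  have hE : E s.toList ((s.erase γ).toList ++ [γ]) := perm_E hperm (toList_pairwise hpw)
  refine ⟨h' * Hike.mk (s.erase γ).toList, ?_⟩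
  rw [hike_mk_eq.2 hE, mk_append, mul_assoc]

end SieveAux

namespace SieveAux
variable {N : ℕ} {Adj : Fin N → Fin N → Prop}

lemma lengthIs_mk_iff {l : List (SimpleCycle N Adj)} {ℓ : ℕ} :
    Hike.lengthIs (Hike.mk l) ℓ ↔ (l.map fun c => c.length).sum = ℓ := by
  constructor
  · rintro ⟨l', hl', hsum⟩
    have hE : E l l' := hike_mk_eq.1 hl'
    exact (len_invariant hE).trans hsum
  · intro h; exact ⟨l, rfl, h⟩

lemma finite_lengthIs (ℓ : ℕ) (q : Hike Adj → Prop) :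
    {h : Hike Adj | h.lengthIs ℓ ∧ q h}.Finite := by
  have h1 : {h : Hike Adj | h.lengthIs ℓ ∧ q h} ⊆
      (fun l => Hike.mk l) '' {l : List (SimpleCycle N Adj) | l.length ≤ ℓ} := by
    rintro h ⟨⟨l, rfl, hsum⟩, -⟩
    refine ⟨l, ?_, rfl⟩
    have h2 : ∀ i ∈ l.map (fun c => c.length), 1 ≤ i := by
      intro i hi
      obtain ⟨c, _, rfl⟩ := List.mem_map.1 hi
      exact Finset.card_pos.2 c.nonempty
    have h3 := List.length_le_sum_of_one_le _ h2
    simpa [hsum] using h3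
  exact ((List.finite_length_le _ ℓ).image _).subset h1

end SieveAux


open SieveAux

/-- semi-commutative Eratosthenes–Legendre sieve: the number `S(H_ℓ, P)` of
hikes of length `ℓ` not right-divisible by any prime (simple cycle) of `P` equals
`Σ_{d ∈ P^{s.a.}} μ(d)|M_d|`, the sum ranging over self-avoiding hikes `d` built from primes of
`P` (encoded as finite sets of pairwise vertex-disjoint cycles in `P`, the empty set being the
empty hike), with `μ(d) = (-1)^{Ω(d)}` and `M_d` the set of hikes of length `ℓ` that are
left-multiples of `d`. -/
theorem semicommutative_sieve {N : ℕ} (Adj : Fin N → Fin N → Prop)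
    (P : Set (SimpleCycle N Adj)) (ℓ : ℕ) :
    (Nat.card {h : Hike Adj | h.lengthIs ℓ ∧
        ¬ ∃ γ ∈ P, ∃ h' : Hike Adj, h = h' * Hike.mk [γ]} : ℤ) =
      ∑ᶠ s ∈ {s : Finset (SimpleCycle N Adj) | (∀ γ ∈ s, γ ∈ P) ∧
          (s : Set (SimpleCycle N Adj)).Pairwise (fun a b => Disjoint a.verts b.verts)},
        (-1 : ℤ) ^ s.card *
          (Nat.card {h : Hike Adj | h.lengthIs ℓ ∧
              ∃ h' : Hike Adj, h = h' * Hike.mk s.toList} : ℤ) := by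
  classical
  letI : Fintype (SimpleCycle N Adj) := Fintype.ofFinite _
  set D : Hike Adj → Finset (SimpleCycle N Adj) := fun h =>
    Finset.univ.filter (fun γ => γ ∈ P ∧ ∃ h', h = h' * Hike.mk [γ]) with hD
  have hTfin : {h : Hike Adj | h.lengthIs ℓ}.Finite := by
    simpa using finite_lengthIs (Adj := Adj) ℓ (fun _ => True)
  set T : Finset (Hike Adj) := hTfin.toFinset with hT
  have hcard : ∀ q : Hike Adj → Prop,
      (Nat.card {h : Hike Adj | h.lengthIs ℓ ∧ q h}) = (T.filter q).card := by
    intro q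
    rw [Nat.card_eq_card_finite_toFinset (finite_lengthIs ℓ q)]
    congr 1
    ext h
    simp [hT, Set.Finite.mem_toFinset]
  set S : Set (Finset (SimpleCycle N Adj)) := {s | (∀ γ ∈ s, γ ∈ P) ∧
      (s : Set (SimpleCycle N Adj)).Pairwise (fun a b => Disjoint a.verts b.verts)} with hS
  have hSfin : S.Finite := Set.toFinite _
  have hpow : ∀ h : Hike Adj,
      hSfin.toFinset.filter (fun s => ∃ h', h = h' * Hike.mk s.toList) = (D h).powerset := by
    intro h
    ext s
    simp only [Finset.mem_filter, Finset.mem_powerset, Set.Finite.mem_toFinset, hS,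
      Set.mem_setOf_eq]
    constructor
    · rintro ⟨⟨hP, hpw⟩, hdvd⟩
      intro γ hγ
      rw [hD]
      simp only [Finset.mem_filter, Finset.mem_univ, true_and]
      exact ⟨hP γ hγ, divides_of_mem hpw hγ hdvd⟩
    · intro hsub
      have hall : ∀ γ ∈ s, γ ∈ P ∧ ∃ h', h = h' * Hike.mk [γ] := by
        intro γ hγ
        have := hsub hγ
        rw [hD] at this
        simpa using this
      obtain ⟨hpw, hdvd⟩ := finset_divides s (fun γ hγ => (hall γ hγ).2)
      exact ⟨⟨fun γ hγ => (hall γ hγ).1, hpw⟩, hdvd⟩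
  -- rewrite the finsum as a finite sum
  rw [← Set.Finite.coe_toFinset hSfin, finsum_mem_coe_finset]
  -- rewrite all the Nat.cards
  have hstep1 : ∑ s ∈ hSfin.toFinset, (-1 : ℤ) ^ s.card *
      (Nat.card {h : Hike Adj | h.lengthIs ℓ ∧
          ∃ h' : Hike Adj, h = h' * Hike.mk s.toList} : ℤ)
      = ∑ s ∈ hSfin.toFinset, ∑ h ∈ T,
          (if ∃ h' : Hike Adj, h = h' * Hike.mk s.toList then (-1 : ℤ) ^ s.card else 0) := by
    refine Finset.sum_congr rfl ?_
    intro s _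
    rw [hcard (fun h => ∃ h' : Hike Adj, h = h' * Hike.mk s.toList), ← Finset.sum_filter,
      Finset.sum_const, nsmul_eq_mul, mul_comm]
  rw [hstep1, Finset.sum_comm]
  have hstep2 : ∀ h ∈ T, ∑ s ∈ hSfin.toFinset,
      (if ∃ h' : Hike Adj, h = h' * Hike.mk s.toList then (-1 : ℤ) ^ s.card else 0)
      = (if D h = ∅ then (1 : ℤ) else 0) := by
    intro h _
    rw [← Finset.sum_filter, hpow h, Finset.sum_powerset_neg_one_pow_card]
  rw [Finset.sum_congr rfl hstep2]
  rw [← Finset.sum_filter, Finset.sum_const, nsmul_eq_mul, mul_one]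
  rw [hcard (fun h => ¬ ∃ γ ∈ P, ∃ h' : Hike Adj, h = h' * Hike.mk [γ])]
  refine congrArg _ (congrArg Finset.card ?_)
  ext h
  simp only [Finset.mem_filter, and_congr_right_iff]
  intro _
  rw [hD, Finset.filter_eq_empty_iff]
  simp
end
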